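/- arXiv:1106.5882 — 7 statements merged into one kernel-verified Lean document; each statement's English description precedes it below -/
import Mathlib

section
/- Let S be a symmetric n×n matrix over a field C of characteristic zero. The map from pairs (v, A), with v ∈ C^n and A a skewsymmetric n×n matrix, to (v, AS) ∈ C^n × so(n,S) is injective (restricted to its image in so(n,S)) and bijective onto C^n × so(n,S) if and only if S has rank n or n−1. -/
/-!
Congruence `S ↦ Pᵀ S P` (with `A ↦ P⁻¹ A P⁻ᵀ` and `M ↦ P⁻¹ M P`) preserves both the injectivity
of `A ↦ A S` on skew-symmetric matrices and its surjectivity onto `so(S)`, and in characteristic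
`≠ 2` every symmetric matrix is congruent to a diagonal `diag d`, with `n - rank S` zero entries.
When at most one `d j` vanishes the equation `A diag d = M` is solved entrywise by
`A i j = M i j / d j`; at the zero entry the relation `Mᵀ diag d + diag d M = 0` kills the
off-diagonal part of the column and the trace condition its diagonal entry.
If `rank S < n - 1`, two independent vectors `u, v` in the kernel give the nonzero skew-symmetric
`u vᵀ - v uᵀ` annihilated by `S`.
-/

open Matrix

variable {K ι : Type*} [Field K]

lemma eq_zero_of_eq_neg [NeZero (2 : K)] {a : K} (h : a = -a) : a = 0 := by
  have h2 : (2 : K) * a = 0 := by linear_combination h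
  exact (mul_eq_zero.mp h2).resolve_left two_ne_zero

lemma transpose_vecMulVec_sub_vecMulVec (u v : ι → K) :
    (vecMulVec u v - vecMulVec v u)ᵀ = -(vecMulVec u v - vecMulVec v u) := by
  rw [transpose_sub, transpose_vecMulVec, transpose_vecMulVec, neg_sub]

lemma vecMulVec_sub_vecMulVec_ne_zero {u v : ι → K} (h : LinearIndependent K ![u, v]) :
    vecMulVec u v - vecMulVec v u ≠ 0 := by
  intro h0
  obtain ⟨i, hi⟩ := Function.ne_iff.mp (by simpa using h.ne_zero 1 : v ≠ 0)
  have hcol : v i • u + (-u i) • v = 0 := by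
    ext j
    simpa [vecMulVec_apply, mul_comm, sub_eq_add_neg] using congr_fun₂ h0 j i
  exact hi (LinearIndependent.pair_iff.mp h _ _ hcol).1

variable [Fintype ι]

lemma trace_mul_eq_zero_of_transpose_eq_neg [NeZero (2 : K)] {A S : Matrix ι ι K}
    (hA : Aᵀ = -A) (hS : Sᵀ = S) : (A * S).trace = 0 := by
  apply eq_zero_of_eq_neg
  calc (A * S).trace = (A * S)ᵀ.trace := (trace_transpose _).symm
    _ = (S * -A).trace := by rw [transpose_mul, hS, hA]
    _ = -(A * S).trace := by rw [trace_mul_comm, neg_mul, trace_neg]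

lemma transpose_conj_eq_neg {A : Matrix ι ι K} (hA : Aᵀ = -A) (P : Matrix ι ι K) :
    (P * A * Pᵀ)ᵀ = -(P * A * Pᵀ) := by
  rw [transpose_mul, transpose_mul, transpose_transpose, hA, neg_mul, mul_neg, mul_assoc]

lemma exists_transpose_eq_neg_ne_zero_mul_eq_zero {S : Matrix ι ι K} (hS : Sᵀ = S)
    (h : S.rank + 1 < Fintype.card ι) : ∃ A : Matrix ι ι K, Aᵀ = -A ∧ A ≠ 0 ∧ A * S = 0 := by
  have hker : 1 < Module.finrank K (LinearMap.ker S.mulVecLin) := by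
    have := LinearMap.finrank_range_add_finrank_ker S.mulVecLin
    rw [Module.finrank_fintype_fun_eq_card] at this
    rw [Matrix.rank] at h
    omega
  have : Nontrivial (LinearMap.ker S.mulVecLin) := Module.finrank_pos_iff (R := K).mp (by omega)
  obtain ⟨u, hu⟩ := exists_ne (0 : LinearMap.ker S.mulVecLin)
  obtain ⟨v, huv⟩ := exists_linearIndependent_pair_of_one_lt_finrank hker hu
  have huv' : LinearIndependent K ![(u : ι → K), v] :=
    LinearIndependent.pair_iff.mpr fun s t hst =>
      LinearIndependent.pair_iff.mp huv s t (Subtype.ext (by simpa using hst))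
  have hmul (x y : ι → K) (hy : S *ᵥ y = 0) : vecMulVec x y * S = 0 := by
    rw [vecMulVec_mul, ← hS, vecMul_transpose, hy, vecMulVec_zero]
  exact ⟨_, transpose_vecMulVec_sub_vecMulVec _ _, vecMulVec_sub_vecMulVec_ne_zero huv',
    by rw [sub_mul, hmul _ _ v.2, hmul _ _ u.2, sub_zero]⟩

def SkewMulInjective (S : Matrix ι ι K) : Prop :=
  ∀ A : Matrix ι ι K, Aᵀ = -A → A * S = 0 → A = 0

def SkewMulSurjective (S : Matrix ι ι K) : Prop :=
  ∀ M : Matrix ι ι K, Mᵀ * S + S * M = 0 → M.trace = 0 → ∃ A, Aᵀ = -A ∧ A * S = M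

lemma SkewMulInjective.eq_of_mul_eq {S : Matrix ι ι K} (h : SkewMulInjective S)
    {A B : Matrix ι ι K} (hA : Aᵀ = -A) (hB : Bᵀ = -B) (hAB : A * S = B * S) : A = B :=
  sub_eq_zero.mp <| h _ (by rw [transpose_sub, hA, hB, neg_sub_neg, neg_sub])
    (by rw [sub_mul, hAB, sub_self])

variable [DecidableEq ι]

lemma SkewMulInjective.of_transpose_mul_mul {S P : Matrix ι ι K} (hP : IsUnit P)
    (h : SkewMulInjective (Pᵀ * S * P)) : SkewMulInjective S := by
  obtain ⟨Q, hPQ, -⟩ := isUnit_iff_exists.mp hP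
  have hPQT : Qᵀ * Pᵀ = 1 := by rw [← transpose_mul, hPQ, transpose_one]
  intro A hA hAS
  have hconj : Q * A * Qᵀ = 0 := by
    refine h _ (transpose_conj_eq_neg hA _) ?_
    calc Q * A * Qᵀ * (Pᵀ * S * P) = Q * (A * S) * P := by
          simp only [mul_assoc, ← mul_assoc Qᵀ, hPQT, one_mul]
      _ = 0 := by rw [hAS, mul_zero, zero_mul]
  calc A = P * (Q * A * Qᵀ) * Pᵀ := by
        simp only [← mul_assoc, hPQ, one_mul]
        simp only [mul_assoc, hPQT, mul_one]
    _ = 0 := by rw [hconj, mul_zero, zero_mul]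

lemma SkewMulSurjective.of_transpose_mul_mul {S P : Matrix ι ι K} (hP : IsUnit P)
    (h : SkewMulSurjective (Pᵀ * S * P)) : SkewMulSurjective S := by
  obtain ⟨Q, hPQ, -⟩ := isUnit_iff_exists.mp hP
  have hPQT : Qᵀ * Pᵀ = 1 := by rw [← transpose_mul, hPQ, transpose_one]
  intro M hM htr
  have hM' : (Q * M * P)ᵀ * (Pᵀ * S * P) + Pᵀ * S * P * (Q * M * P) = 0 :=
    calc (Q * M * P)ᵀ * (Pᵀ * S * P) + Pᵀ * S * P * (Q * M * P)
        = Pᵀ * (Mᵀ * S + S * M) * P := by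
          simp only [transpose_mul, mul_assoc, ← mul_assoc Qᵀ, hPQT, one_mul,
            ← mul_assoc P Q, hPQ, mul_add, add_mul]
      _ = 0 := by rw [hM, mul_zero, zero_mul]
  have htr' : (Q * M * P).trace = 0 := by rw [trace_mul_cycle, hPQ, one_mul, htr]
  obtain ⟨A, hA, hAM⟩ := h _ hM' htr'
  refine ⟨P * A * Pᵀ, transpose_conj_eq_neg hA _, ?_⟩
  calc P * A * Pᵀ * S = P * (A * (Pᵀ * S * P)) * Q := by simp only [mul_assoc, hPQ, mul_one]
    _ = M := by
        rw [hAM]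
        simp only [← mul_assoc, hPQ, one_mul]
        simp only [mul_assoc, hPQ, mul_one]

lemma skewMulInjective_diagonal [NeZero (2 : K)] {d : ι → K} (hd : {i | d i = 0}.Subsingleton) :
    SkewMulInjective (diagonal d) := by
  intro A hA hAd
  have hskew (i j : ι) : A j i = -A i j := by simpa using congr_fun₂ hA i j
  have hcol (i j : ι) (hj : d j ≠ 0) : A i j = 0 := by
    simpa [mul_diagonal, hj] using congr_fun₂ hAd i j
  ext i j
  rw [Matrix.zero_apply]
  by_cases hj : d j = 0
  · by_cases hi : d i = 0
    · obtain rfl := hd hi hj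
      exact eq_zero_of_eq_neg (hskew i i)
    · rw [← neg_eq_zero, ← hskew, hcol j i hi]
  · exact hcol i j hj

lemma skewMulSurjective_diagonal [NeZero (2 : K)] {d : ι → K} (hd : {i | d i = 0}.Subsingleton) :
    SkewMulSurjective (diagonal d) := by
  classical
  intro M hM htr
  have hrel (i j : ι) : M j i * d j + d i * M i j = 0 := by
    simpa [mul_diagonal, diagonal_mul] using congr_fun₂ hM i j
  have hdiag (i : ι) (hi : d i ≠ 0) : M i i = 0 := by
    have h2 : (2 : K) * d i * M i i = 0 := by linear_combination hrel i i
    simpa [hi, two_ne_zero] using h2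
  have hcol (i j : ι) (hj : d j = 0) : M i j = 0 := by
    by_cases hi : d i = 0
    · obtain rfl := hd hi hj
      have htr_eq : M.trace = M i i :=
        Finset.sum_eq_single i (fun l _ hl => hdiag l fun h => hl (hd h hi)) (by simp)
      rwa [htr_eq] at htr
    · simpa [hj, hi] using hrel i j
  refine ⟨of fun i j => if d j = 0 then -(M j i / d i) else M i j / d j, ?_, ?_⟩
  · ext i j
    simp only [transpose_apply, Matrix.neg_apply, of_apply]
    by_cases hi : d i = 0 <;> by_cases hj : d j = 0
    -- here `i = j` and both sides are the junk value `M i i / 0 = 0`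
    · obtain rfl := hd hi hj
      simp [hi]
    · simp [hi, hj]
    · simp [hi, hj]
    · simp only [hi, hj, if_false]
      field_simp
      linear_combination hrel i j
  · ext i j
    rw [mul_diagonal, of_apply]
    split_ifs with hj
    · rw [hj, mul_zero, hcol i j hj]
    · exact div_mul_cancel₀ _ hj

lemma exists_isUnit_transpose_mul_mul_eq_diagonal [NeZero (2 : K)] {S : Matrix ι ι K}
    (hS : Sᵀ = S) : ∃ (P : Matrix ι ι K) (d : ι → K), IsUnit P ∧ Pᵀ * S * P = diagonal d := by
  have : Invertible (2 : K) := invertibleOfNonzero two_ne_zero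
  obtain ⟨v, hv⟩ := LinearMap.BilinForm.exists_orthogonal_basis
    (LinearMap.BilinForm.isSymm_iff.mp (isSymm_toBilin'_iff_isSymm.mpr hS))
  let w := v.reindex (Fintype.equivFinOfCardEq (Module.finrank_fintype_fun_eq_card K).symm).symm
  have hw : Pairwise fun i j => toBilin' S (w i) (w j) = 0 := fun i j hij => by
    simpa [w] using hv (by simpa using hij)
  refine ⟨(Pi.basisFun K ι).toMatrix w, fun i => toBilin' S (w i) (w i),
    letI := (Pi.basisFun K ι).invertibleToMatrix w; isUnit_of_invertible _, ?_⟩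
  conv_lhs =>
    rw [← LinearMap.BilinForm.toMatrix'_toBilin' S, ← LinearMap.BilinForm.toMatrix_basisFun]
  rw [LinearMap.BilinForm.toMatrix_mul_basis_toMatrix]
  ext i j
  rw [LinearMap.BilinForm.toMatrix_apply]
  rcases eq_or_ne i j with rfl | hij
  · simp
  · rw [hw hij, diagonal_apply_ne _ hij]

lemma subsingleton_setOf_eq_zero_of_card_le_rank_diagonal_add_one {d : ι → K}
    (h : Fintype.card ι ≤ (diagonal d).rank + 1) : {i | d i = 0}.Subsingleton := by
  classical
  rw [rank_diagonal, Fintype.card_subtype_compl] at h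
  have hle := Fintype.card_subtype_le (fun i => d i = 0)
  have : Subsingleton {i // d i = 0} := Fintype.card_le_one_iff_subsingleton.mp (by omega)
  exact (Set.subsingleton_coe _).mp this

lemma skewMulInjective_and_skewMulSurjective_of_card_le_rank_add_one [NeZero (2 : K)]
    {S : Matrix ι ι K} (hS : Sᵀ = S) (h : Fintype.card ι ≤ S.rank + 1) :
    SkewMulInjective S ∧ SkewMulSurjective S := by
  obtain ⟨P, d, hP, hPSP⟩ := exists_isUnit_transpose_mul_mul_eq_diagonal hS
  have hdet : IsUnit P.det := (isUnit_iff_isUnit_det P).mp hP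
  have hd : {i | d i = 0}.Subsingleton := by
    refine subsingleton_setOf_eq_zero_of_card_le_rank_diagonal_add_one ?_
    rwa [← hPSP, rank_mul_eq_left_of_isUnit_det P _ hdet,
      rank_mul_eq_right_of_isUnit_det _ _ (by rwa [det_transpose])]
  exact ⟨.of_transpose_mul_mul hP (hPSP ▸ skewMulInjective_diagonal hd),
    .of_transpose_mul_mul hP (hPSP ▸ skewMulSurjective_diagonal hd)⟩

/-- Let `S` be a symmetric n×n matrix over a field `C` of characteristic
zero.  The map `(v, A) ↦ (v, A*S)`, from pairs of a vector `v ∈ C^n` and a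
skewsymmetric matrix `A` to `C^n × so(n,S)`, is well defined (i.e. `A*S ∈ so(n,S)`
for skewsymmetric `A`); since the first component is the identity, it is bijective
onto `C^n × so(n,S)` iff the matrix part `A ↦ A*S` is injective onto `so(n,S)` and
surjective, which happens iff `rank S = n` or `rank S = n − 1`; and it fails to be
injective whenever `rank S < n − 1`. -/
theorem stmt_1 {C : Type} [Field C] [CharZero C] (n : ℕ)
    (S : Matrix (Fin n) (Fin n) C) (hS : Sᵀ = S) :
    (∀ A : Matrix (Fin n) (Fin n) C, Aᵀ = -A →
        (A * S)ᵀ * S + S * (A * S) = 0 ∧ (A * S).trace = 0) ∧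
    (((∀ A B : Matrix (Fin n) (Fin n) C, Aᵀ = -A → Bᵀ = -B → A * S = B * S → A = B) ∧
      (∀ M : Matrix (Fin n) (Fin n) C, Mᵀ * S + S * M = 0 → M.trace = 0 →
        ∃ A, Aᵀ = -A ∧ A * S = M)) ↔ (S.rank = n ∨ S.rank + 1 = n)) ∧
    (S.rank + 1 < n →
      ∃ A : Matrix (Fin n) (Fin n) C, Aᵀ = -A ∧ A ≠ 0 ∧ A * S = 0) := by
  have hlow : S.rank + 1 < n → ∃ A : Matrix (Fin n) (Fin n) C, Aᵀ = -A ∧ A ≠ 0 ∧ A * S = 0 := by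
    simpa using exists_transpose_eq_neg_ne_zero_mul_eq_zero (ι := Fin n) hS
  have hrank : S.rank ≤ n := S.rank_le_width
  refine ⟨fun A hA => ⟨?_, trace_mul_eq_zero_of_transpose_eq_neg hA hS⟩, ⟨?_, fun h => ?_⟩, hlow⟩
  · rw [transpose_mul, hS, hA]
    noncomm_ring
  · rintro ⟨hinj, -⟩
    by_contra hne
    obtain ⟨A, hA, hA0, hAS⟩ := hlow (by omega)
    exact hA0 (hinj A 0 hA (by simp) (by simp [hAS]))
  · obtain ⟨hinj, hsurj⟩ := skewMulInjective_and_skewMulSurjective_of_card_le_rank_add_one hS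
      (by rw [Fintype.card_fin]; omega)
    exact ⟨fun A B => hinj.eq_of_mul_eq, hsurj⟩
end

section
/- Let F be a differential field with derivation ∂ and field of constants C of characteristic zero. Let F₁,…,F_m ∈ F^ℓ be linearly independent over C and suppose they all satisfy a common linear differential equation F^{(N)} = A₀F + A₁F' + ⋯ + A_{N−1}F^{(N−1)} for some fixed A₀,…,A_{N−1} ∈ Mat_{ℓ×ℓ}(F). Then the vectors G_s = (F_s, F_s', …, F_s^{(N−1)}) ∈ F^{Nℓ}, s = 1,…,m, are linearly independent over F. -/
/-- Let `F` be a differential field with derivation `d` whose field of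
constants has characteristic zero.  If `F₁,…,F_m ∈ F^ℓ` are linearly independent over
the constants and all satisfy a common linear ODE
`F^{(N)} = A₀ F + A₁ F' + ⋯ + A_{N−1} F^{(N−1)}` with `A_k ∈ Mat_{ℓ×ℓ}(F)`, then the
stacked vectors `G_s = (F_s, F_s', …, F_s^{(N−1)}) ∈ F^{Nℓ}` are linearly independent
over `F`. -/
theorem stmt_3 {F : Type} [Field F] [CharZero F] (d : F → F)
    (hd_add : ∀ a b, d (a + b) = d a + d b)
    (hd_mul : ∀ a b, d (a * b) = d a * b + a * d b)
    (ℓ m N : ℕ)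
    (Fv : Fin m → Fin ℓ → F)
    (A : Fin N → Matrix (Fin ℓ) (Fin ℓ) F)
    (hode : ∀ (s : Fin m) (i : Fin ℓ),
      d^[N] (Fv s i) = ∑ k : Fin N, ∑ j, A k i j * d^[(k : ℕ)] (Fv s j))
    (hindep : ∀ c : Fin m → F, (∀ s, d (c s) = 0) →
      (∀ i, ∑ s, c s * Fv s i = 0) → c = 0) :
    ∀ a : Fin m → F,
      (∀ (k : Fin N) (i : Fin ℓ), ∑ s, a s * d^[(k : ℕ)] (Fv s i) = 0) → a = 0 := by
  classical
  have hd0 : d 0 = 0 := by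
    have h := hd_add 0 0
    rw [add_zero] at h
    exact (left_eq_add.mp h)
  have hd1 : d 1 = 0 := by
    have h := hd_mul 1 1
    rw [mul_one, mul_one, one_mul] at h
    exact (left_eq_add.mp h)
  have hDsum : ∀ (g : Fin m → F), d (∑ s, g s) = ∑ s, d (g s) := by
    intro g
    exact map_sum (AddMonoidHom.mk' d hd_add) g Finset.univ
  rcases Nat.eq_zero_or_pos N with hN | hN
  · subst hN
    intro a _
    have hFv : ∀ s i, Fv s i = 0 := by
      intro s i
      have h := hode s i
      simpa using h
    funext s
    have hc := hindep (Pi.single s 1) ?_ ?_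
    · exact absurd (congrFun hc s) (by simp)
    · intro t
      rcases eq_or_ne t s with rfl | h
      · simp [Pi.single_eq_same, hd1]
      · simp [Pi.single_eq_of_ne h, hd0]
    · intro i
      simp [hFv]
  set P : (Fin m → F) → Prop :=
    fun a => ∀ (k : Fin N) (i : Fin ℓ), ∑ s, a s * d^[(k : ℕ)] (Fv s i) = 0 with hP
  have hPd : ∀ a, P a → P (fun s => d (a s)) := by
    intro a ha k i
    have h1 : d (∑ s, a s * d^[(k : ℕ)] (Fv s i)) = 0 := by rw [ha k i]; exact hd0
    have h2 : d (∑ s, a s * d^[(k : ℕ)] (Fv s i))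
        = (∑ s, d (a s) * d^[(k : ℕ)] (Fv s i))
          + ∑ s, a s * d^[(k : ℕ)+1] (Fv s i) := by
      rw [hDsum]
      rw [← Finset.sum_add_distrib]
      refine Finset.sum_congr rfl fun s _ => ?_
      rw [hd_mul, Function.iterate_succ_apply']
    have h3 : ∑ s, a s * d^[(k : ℕ)+1] (Fv s i) = 0 := by
      rcases lt_or_eq_of_le (Nat.succ_le_of_lt k.isLt) with hk | hk
      · exact ha ⟨(k : ℕ)+1, hk⟩ i
      · rw [show ((k : ℕ)+1) = N from hk]
        calc ∑ s, a s * d^[N] (Fv s i)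
            = ∑ s, a s * ∑ k' : Fin N, ∑ j, A k' i j * d^[(k' : ℕ)] (Fv s j) :=
              Finset.sum_congr rfl fun s _ => by rw [hode s i]
          _ = ∑ k' : Fin N, ∑ s, ∑ j, a s * (A k' i j * d^[(k' : ℕ)] (Fv s j)) := by
              simp only [Finset.mul_sum]
              exact Finset.sum_comm
          _ = 0 := by
              refine Finset.sum_eq_zero fun k' _ => ?_
              rw [Finset.sum_comm]
              refine Finset.sum_eq_zero fun j _ => ?_
              calc ∑ s, a s * (A k' i j * d^[(k' : ℕ)] (Fv s j))
                  = A k' i j * ∑ s, a s * d^[(k' : ℕ)] (Fv s j) := by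
                    rw [Finset.mul_sum]
                    exact Finset.sum_congr rfl fun s _ => by ring
                _ = 0 := by rw [ha k' j, mul_zero]
    rw [h2, h3, add_zero] at h1
    exact h1
  have key : ∀ n : ℕ, ∀ a : Fin m → F, P a →
      (Finset.univ.filter (fun s => a s ≠ 0)).card ≤ n → a = 0 := by
    intro n
    induction n with
    | zero =>
      intro a _ hcard
      funext s
      simp only [Pi.zero_apply]
      by_contra hs
      have hmem : s ∈ Finset.univ.filter (fun s => a s ≠ 0) := by simp [hs]
      have := Finset.card_pos.mpr ⟨s, hmem⟩
      omega
    | succ n ih =>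
      intro a haP hcard
      by_cases h0 : a = 0
      · exact h0
      · obtain ⟨s0, hs0⟩ := Function.ne_iff.mp h0
        simp only [Pi.zero_apply] at hs0
        set a' : Fin m → F := fun s => a s * (a s0)⁻¹ with ha'
        have ha'P : P a' := by
          intro k i
          calc ∑ s, a' s * d^[(k : ℕ)] (Fv s i)
              = (a s0)⁻¹ * ∑ s, a s * d^[(k : ℕ)] (Fv s i) := by
                rw [Finset.mul_sum]
                exact Finset.sum_congr rfl fun s _ => by rw [ha']; ring
            _ = 0 := by rw [haP k i, mul_zero]
        have hbP : P (fun s => d (a' s)) := hPd a' ha'P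
        have hs0mem : s0 ∈ Finset.univ.filter (fun s => a s ≠ 0) := by simp [hs0]
        have hsub : (Finset.univ.filter (fun s => d (a' s) ≠ 0)) ⊆
            (Finset.univ.filter (fun s => a s ≠ 0)).erase s0 := by
          intro t ht
          simp only [Finset.mem_filter, Finset.mem_univ, true_and] at ht
          rw [Finset.mem_erase]
          refine ⟨?_, ?_⟩
          · rintro rfl
            apply ht
            simp [ha', mul_inv_cancel₀ hs0, hd1]
          · simp only [Finset.mem_filter, Finset.mem_univ, true_and]
            intro hat
            apply ht
            simp [ha', hat, hd0]
        have hb0 := ih (fun s => d (a' s)) hbP (by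
          calc (Finset.univ.filter (fun s => d (a' s) ≠ 0)).card
              ≤ ((Finset.univ.filter (fun s => a s ≠ 0)).erase s0).card :=
                Finset.card_le_card hsub
            _ = (Finset.univ.filter (fun s => a s ≠ 0)).card - 1 :=
                Finset.card_erase_of_mem hs0mem
            _ ≤ n := by omega)
        have hzero := hindep a' (fun s => congrFun hb0 s) (fun i => by
          have h := ha'P ⟨0, hN⟩ i
          simpa using h)
        have : a' s0 = (0 : F) := congrFun hzero s0
        rw [ha'] at this
        simp only [mul_inv_cancel₀ hs0] at this
        exact absurd this one_ne_zero
  intro a ha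
  exact key m a ha (le_trans (Finset.card_le_card (Finset.filter_subset _ _)) (by simp))
end

section
/- Let F be a differential field with field of constants C of characteristic zero, and let K(∂) be an ℓ×ℓ matrix differential operator of order N over F with invertible leading coefficient, such that the C-vector space ker(K(∂)) ⊆ F^ℓ has dimension Nℓ. If P(∂) is an m×ℓ matrix differential operator over F of order at most N−1 such that P(∂)F = 0 for every F ∈ ker(K(∂)), then P(∂) = 0. -/
/-- Application of a matrix differential operator `K(∂) = Σ_{n<M} K_n ∂^n`
(given by its coefficients `K : Fin M → Matrix (Fin m) (Fin ℓ) F`) to a vector. -/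
def applyOp {F : Type} [Field F] (d : F → F) {ℓ m M : ℕ}
    (K : Fin M → Matrix (Fin m) (Fin ℓ) F) (v : Fin ℓ → F) : Fin m → F :=
  fun i => ∑ n : Fin M, ∑ j, K n i j * d^[(n : ℕ)] (v j)

/-! The `N`-jets `(∂ⁿ y)_{n<N}` of the `Nℓ` solutions `y` are linearly independent over `F`.
Indeed, since the leading coefficient of `K(∂)` is invertible, `∂ᴺ y` is an `F`-linear function of
the jet of a solution `y`, so the `F`-linear relations among the jets form a `∂`-stable subspace of
`F^{Nℓ}`; a nonzero such subspace contains a nonzero constant vector (take a vector of minimal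
support), which would be a `C`-linear relation among the solutions. Hence the jets span
`F^{N×ℓ}`, and since `P(∂) y` is an `F`-linear function of the jet of `y` vanishing on all of
them, `P(∂) = 0`. -/

open Finset Matrix

theorem Derivation.exists_ne_zero_forall_eq_zero_of_comp_mem {R K ι : Type*} [CommRing R]
    [Field K] [Algebra R K] [Fintype ι] (D : Derivation R K K) (S : Submodule K (ι → K))
    (hS : ∀ b ∈ S, ⇑D ∘ b ∈ S) {b : ι → K} (hb : b ∈ S) (hb0 : b ≠ 0) :
    ∃ c ∈ S, c ≠ 0 ∧ ∀ s, D (c s) = 0 := by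
  classical
  induction h : #{s | b s ≠ 0} using Nat.strong_induction_on generalizing b with
  | _ k ih =>
  obtain ⟨s₀, hs₀⟩ : ∃ s, b s ≠ 0 := Function.ne_iff.mp hb0
  set c := (b s₀)⁻¹ • b
  have hc : c ∈ S := S.smul_mem _ hb
  have hcs₀ : c s₀ = 1 := by simp [c, hs₀]
  -- `c` is normalised at `s₀`, so `D ∘ c` has strictly smaller support than `b`.
  by_cases hDc : ⇑D ∘ c = 0
  · exact ⟨c, hc, fun h => by simp [h] at hcs₀, fun s => congrFun hDc s⟩
  refine ih _ ?_ (hS c hc) hDc rfl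
  rw [← h]
  refine card_lt_card ((ssubset_iff_of_subset fun s => ?_).mpr ⟨s₀, ?_⟩)
  · simp only [mem_filter, mem_univ, true_and, Function.comp_apply]
    intro hs hbs
    simp [c, hbs] at hs
  · simp [hs₀, hcs₀]

def jet {F : Type*} {ℓ : ℕ} (d : F → F) (N : ℕ) (v : Fin ℓ → F) : Fin N × Fin ℓ → F :=
  fun x => d^[x.1] (v x.2)

def coeffMatrix {F : Type*} {ℓ m N : ℕ} (P : Fin N → Matrix (Fin m) (Fin ℓ) F) :
    Matrix (Fin m) (Fin N × Fin ℓ) F :=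
  Matrix.of fun i x => P x.1 i x.2

section

variable {F : Type} [Field F] {ℓ m N : ℕ}

theorem applyOp_eq_mulVec_jet (d : F → F) (P : Fin N → Matrix (Fin m) (Fin ℓ) F)
    (v : Fin ℓ → F) : applyOp d P v = coeffMatrix P *ᵥ jet d N v := by
  ext i
  simp [applyOp, coeffMatrix, jet, Matrix.mulVec, dotProduct, Fintype.sum_prod_type]

theorem applyOp_eq_applyOp_castSucc_add (d : F → F) (K : Fin (N + 1) → Matrix (Fin m) (Fin ℓ) F)
    (v : Fin ℓ → F) :
    applyOp d K v =
      applyOp d (fun n => K n.castSucc) v + K (Fin.last N) *ᵥ fun j => d^[N] (v j) := by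
  ext i
  simp [applyOp, Fin.sum_univ_castSucc, Matrix.mulVec, dotProduct]

variable {R : Type*} [CommRing R] [Algebra R F] (D : Derivation R F F) {ι : Type*} [Fintype ι]
  {K : Fin (N + 1) → Matrix (Fin ℓ) (Fin ℓ) F} {y : ι → Fin ℓ → F}

theorem sum_smul_iterate_eq_zero (hK : IsUnit (K (Fin.last N)))
    (hy : ∀ s, applyOp D K (y s) = 0) {b : ι → F} (hb : ∑ s, b s • jet D N (y s) = 0) :
    ∑ s, b s • (fun j => D^[N] (y s j)) = 0 := by
  have hlead : ∀ s, K (Fin.last N) *ᵥ (fun j => D^[N] (y s j)) =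
      -(coeffMatrix (fun n => K n.castSucc) *ᵥ jet D N (y s)) := fun s => by
    rw [← applyOp_eq_mulVec_jet, eq_neg_iff_add_eq_zero, add_comm,
      ← applyOp_eq_applyOp_castSucc_add, hy]
  apply mulVec_injective_iff_isUnit.mpr hK
  simp_rw [mulVec_zero, mulVec_sum, mulVec_smul, hlead, smul_neg, ← mulVec_smul, sum_neg_distrib,
    ← mulVec_sum, hb, mulVec_zero, neg_zero]

theorem sum_derivation_smul_jet_eq_zero (hK : IsUnit (K (Fin.last N)))
    (hy : ∀ s, applyOp D K (y s) = 0) {b : ι → F} (hb : ∑ s, b s • jet D N (y s) = 0) :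
    ∑ s, D (b s) • jet D N (y s) = 0 := by
  have hcomp : ∀ (n : ℕ) (hn : n < N) j, ∑ s, b s * D^[n] (y s j) = 0 := fun n hn j => by
    simpa [jet] using congrFun hb (⟨n, hn⟩, j)
  have hnext : ∀ (n : ℕ) (hn : n < N) j, ∑ s, b s * D^[n + 1] (y s j) = 0 := by
    intro n hn j
    obtain hlt | rfl := (Nat.succ_le_of_lt hn).lt_or_eq
    · exact hcomp _ hlt j
    · simpa using congrFun (sum_smul_iterate_eq_zero D hK hy hb) j
  ext ⟨n, j⟩
  have hD := congrArg D (hcomp n n.isLt j)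
  simp only [map_sum, Derivation.leibniz, smul_eq_mul, map_zero, sum_add_distrib,
    ← Function.iterate_succ_apply' D, hnext n n.isLt j, zero_add] at hD
  simpa [jet, mul_comm] using hD

theorem linearIndependent_jet (hN : 0 < N) (hK : IsUnit (K (Fin.last N)))
    (hy : ∀ s, applyOp D K (y s) = 0)
    (hindep : ∀ c : ι → F, (∀ s, D (c s) = 0) → ∑ s, c s • y s = 0 → c = 0) :
    LinearIndependent F fun s => jet D N (y s) := by
  by_contra hdep
  obtain ⟨b, hb, s, hbs⟩ := Fintype.not_linearIndependent_iff.mp hdep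
  have hb0 : b ≠ 0 := fun h => hbs (congrFun h s)
  obtain ⟨c, hc, hc0, hconst⟩ := D.exists_ne_zero_forall_eq_zero_of_comp_mem
    (LinearMap.ker (Fintype.linearCombination F fun s => jet D N (y s)))
    (fun b hb => by
      simpa [Fintype.linearCombination_apply] using sum_derivation_smul_jet_eq_zero D hK hy
        (by simpa [Fintype.linearCombination_apply] using hb))
    (by simpa [Fintype.linearCombination_apply] using hb) hb0
  refine hc0 (hindep c hconst ?_)
  ext j
  simpa [Fintype.linearCombination_apply, jet] using congrFun hc (⟨0, hN⟩, j)

end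

theorem Matrix.eq_zero_of_forall_mulVec_eq_zero {R m n ι : Type*} [CommRing R] [Fintype n]
    [DecidableEq n] {A : Matrix m n R} {v : ι → n → R}
    (hv : Submodule.span R (Set.range v) = ⊤) (hA : ∀ i, A *ᵥ v i = 0) : A = 0 :=
  Matrix.toLin'.map_eq_zero_iff.mp (LinearMap.ext_on_range hv fun i => by simpa using hA i)

def Derivation.ofLeibniz {F : Type*} [CommRing F] (d : F → F)
    (hd_add : ∀ a b, d (a + b) = d a + d b) (hd_mul : ∀ a b, d (a * b) = d a * b + a * d b) :
    Derivation ℤ F F :=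
  Derivation.mk' (AddMonoidHom.mk' d hd_add).toIntLinearMap fun a b => by
    simp [hd_mul, add_comm, mul_comm]

theorem stmt_4_general {F : Type} [Field F] (d : F → F)
    (hd_add : ∀ a b, d (a + b) = d a + d b)
    (hd_mul : ∀ a b, d (a * b) = d a * b + a * d b)
    (ℓ m N : ℕ)
    (K : Fin (N + 1) → Matrix (Fin ℓ) (Fin ℓ) F)
    (hKN : IsUnit (K (Fin.last N)))
    (Fb : Fin (N * ℓ) → Fin ℓ → F)
    (hsol : ∀ s, applyOp d K (Fb s) = 0)
    (hindep : ∀ c : Fin (N * ℓ) → F, (∀ s, d (c s) = 0) →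
      (∀ i, ∑ s, c s * Fb s i = 0) → c = 0)
    (P : Fin N → Matrix (Fin m) (Fin ℓ) F)
    (hP : ∀ v : Fin ℓ → F, applyOp d K v = 0 → applyOp d P v = 0) :
    ∀ n, P n = 0 := by
  intro n
  let D := Derivation.ofLeibniz d hd_add hd_mul
  have hjet : LinearIndependent F fun s => jet D N (Fb s) :=
    linearIndependent_jet D n.pos hKN hsol fun c hc h =>
      hindep c hc fun i => by simpa using congrFun h i
  have hspan := hjet.span_eq_top_of_card_eq_finrank' (by simp)
  have hP0 : coeffMatrix P = 0 := Matrix.eq_zero_of_forall_mulVec_eq_zero hspan fun s => by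
    rw [← applyOp_eq_mulVec_jet]
    exact hP _ (hsol s)
  ext i j
  simpa [coeffMatrix] using congrFun (congrFun hP0 i) (n, j)

/-- Let `F` be a differential field with constants `C` of characteristic
zero, and `K(∂)` an ℓ×ℓ matrix differential operator of order `N` over `F` with
invertible leading coefficient whose kernel in `F^ℓ` has `C`-dimension `Nℓ`
(i.e. admits a `C`-basis `Fb` of `Nℓ` solutions).  If `P(∂)` is an `m×ℓ` matrix
differential operator of order `≤ N−1` annihilating `ker K(∂)`, then `P(∂) = 0`. -/
theorem stmt_4 {F : Type} [Field F] [CharZero F] (d : F → F)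
    (hd_add : ∀ a b, d (a + b) = d a + d b)
    (hd_mul : ∀ a b, d (a * b) = d a * b + a * d b)
    (ℓ m N : ℕ)
    (K : Fin (N + 1) → Matrix (Fin ℓ) (Fin ℓ) F)
    (hKN : IsUnit (K (Fin.last N)))
    (Fb : Fin (N * ℓ) → Fin ℓ → F)
    (hsol : ∀ s, applyOp d K (Fb s) = 0)
    (hindep : ∀ c : Fin (N * ℓ) → F, (∀ s, d (c s) = 0) →
      (∀ i, ∑ s, c s * Fb s i = 0) → c = 0)
    (hspan : ∀ v : Fin ℓ → F, applyOp d K v = 0 →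
      ∃ c : Fin (N * ℓ) → F, (∀ s, d (c s) = 0) ∧ ∀ i, v i = ∑ s, c s * Fb s i)
    (P : Fin N → Matrix (Fin m) (Fin ℓ) F)
    (hP : ∀ v : Fin ℓ → F, applyOp d K v = 0 → applyOp d P v = 0) :
    ∀ n, P n = 0 :=
  stmt_4_general d hd_add hd_mul ℓ m N K hKN Fb hsol hindep P hP
end

section
/- Let F be a differential field with constants C of characteristic zero and let K(∂) be an ℓ×ℓ matrix differential operator over F of order N with invertible leading coefficient. If F₁,…,F_{Nℓ} ∈ F^ℓ form a basis over C of ker(K(∂)), then the Nℓ×Nℓ Wronskian matrix W whose s-th column is (F_s, F_s',…,F_s^{(N−1)}) is invertible over F. -/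
/-- Let `F` be a differential field with constants `C` of characteristic
zero and `K(∂)` an ℓ×ℓ matrix differential operator of order `N` with invertible
leading coefficient.  If `Fb` (indexed by `Fin N × Fin ℓ`, i.e. `Nℓ` elements) is a
`C`-basis of `ker K(∂) ⊆ F^ℓ`, then the `Nℓ×Nℓ` Wronskian matrix
`W (k,i) q = (d^k (Fb q)) i` is invertible over `F`. -/
theorem stmt_5 {F : Type} [Field F] [CharZero F] (d : F → F)
    (hd_add : ∀ a b, d (a + b) = d a + d b)
    (hd_mul : ∀ a b, d (a * b) = d a * b + a * d b)
    (ℓ N : ℕ)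
    (K : Fin (N + 1) → Matrix (Fin ℓ) (Fin ℓ) F)
    (hKN : IsUnit (K (Fin.last N)))
    (Fb : Fin N × Fin ℓ → Fin ℓ → F)
    (hsol : ∀ q, applyOp d K (Fb q) = 0)
    (hindep : ∀ c : Fin N × Fin ℓ → F, (∀ q, d (c q) = 0) →
      (∀ i, ∑ q, c q * Fb q i = 0) → c = 0)
    (hspan : ∀ v : Fin ℓ → F, applyOp d K v = 0 →
      ∃ c : Fin N × Fin ℓ → F, (∀ q, d (c q) = 0) ∧ ∀ i, v i = ∑ q, c q * Fb q i) :
    IsUnit (Matrix.of fun (p q : Fin N × Fin ℓ) => d^[(p.1 : ℕ)] (Fb q p.2)) := by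
  classical
  have hd0 : d 0 = 0 := by
    have h := hd_add 0 0
    rw [add_zero] at h
    exact (left_eq_add.mp h)
  have hd1 : d 1 = 0 := by
    have h := hd_mul 1 1
    rw [mul_one, one_mul, mul_one] at h
    exact (left_eq_add.mp h)
  set W : Matrix (Fin N × Fin ℓ) (Fin N × Fin ℓ) F :=
    Matrix.of fun (p q : Fin N × Fin ℓ) => d^[(p.1 : ℕ)] (Fb q p.2) with hW
  -- the additive hom version of d
  let D : F →+ F := AddMonoidHom.mk' d hd_add
  -- relations for k < N from mulVec
  have hlt : ∀ c : Fin N × Fin ℓ → F, W.mulVec c = 0 →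
      ∀ k : ℕ, (hk : k < N) → ∀ i, ∑ q, c q * d^[k] (Fb q i) = 0 := by
    intro c hc k hk i
    have h := congrFun hc (⟨k, hk⟩, i)
    simpa [W, Matrix.mulVec, dotProduct, mul_comm] using h
  -- relations for all k ≤ N
  have relA : ∀ c : Fin N × Fin ℓ → F, W.mulVec c = 0 →
      ∀ k : ℕ, k ≤ N → ∀ i, ∑ q, c q * d^[k] (Fb q i) = 0 := by
    intro c hc k hk i
    rcases lt_or_eq_of_le hk with hk' | hk'
    · exact hlt c hc k hk' i
    subst hk'
    -- use the differential equation
    set u : Fin ℓ → F := fun j => ∑ q, c q * d^[k] (Fb q j) with hu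
    have hKu : (K (Fin.last k)).mulVec u = 0 := by
      funext i'
      have h1 : ∑ q, c q * (∑ n : Fin (k + 1), ∑ j, K n i' j * d^[(n : ℕ)] (Fb q j)) = 0 := by
        have : ∀ q, ∑ n : Fin (k + 1), ∑ j, K n i' j * d^[(n : ℕ)] (Fb q j) = 0 := by
          intro q
          have := congrFun (hsol q) i'
          simpa [applyOp] using this
        simp [this]
      have h0 : ∑ n : Fin (k + 1), ∑ j, K n i' j * (∑ q, c q * d^[(n : ℕ)] (Fb q j)) = 0 := by
        calc ∑ n : Fin (k + 1), ∑ j, K n i' j * (∑ q, c q * d^[(n : ℕ)] (Fb q j))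
            = ∑ n : Fin (k + 1), ∑ j, ∑ q, c q * (K n i' j * d^[(n : ℕ)] (Fb q j)) := by
              refine Finset.sum_congr rfl fun n _ => Finset.sum_congr rfl fun j _ => ?_
              rw [Finset.mul_sum]
              exact Finset.sum_congr rfl fun q _ => by ring
          _ = ∑ n : Fin (k + 1), ∑ q, ∑ j, c q * (K n i' j * d^[(n : ℕ)] (Fb q j)) :=
              Finset.sum_congr rfl fun n _ => Finset.sum_comm
          _ = ∑ q, ∑ n : Fin (k + 1), ∑ j, c q * (K n i' j * d^[(n : ℕ)] (Fb q j)) :=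
              Finset.sum_comm
          _ = ∑ q, c q * (∑ n : Fin (k + 1), ∑ j, K n i' j * d^[(n : ℕ)] (Fb q j)) := by
              refine Finset.sum_congr rfl fun q _ => ?_
              simp_rw [Finset.mul_sum]
          _ = 0 := h1
      rw [Fin.sum_univ_castSucc] at h0
      have hzero : ∀ n : Fin k, ∑ j, K n.castSucc i' j *
          (∑ q, c q * d^[((n.castSucc : Fin (k+1)) : ℕ)] (Fb q j)) = 0 := by
        intro n
        have h : ∀ j, (∑ q, c q * d^[(n : ℕ)] (Fb q j)) = 0 := fun j => hlt c hc n n.isLt j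
        simp only [Fin.coe_castSucc]
        simp [h]
      rw [Finset.sum_eq_zero (fun n _ => hzero n), zero_add] at h0
      simp only [Fin.val_last] at h0
      simpa [Matrix.mulVec, dotProduct, hu] using h0
    -- invert K_N
    obtain ⟨B, hB⟩ := hKN.exists_left_inv
    have : u = 0 := by
      calc u = (1 : Matrix (Fin ℓ) (Fin ℓ) F).mulVec u := by rw [Matrix.one_mulVec]
        _ = (B * K (Fin.last k)).mulVec u := by rw [hB]
        _ = B.mulVec ((K (Fin.last k)).mulVec u) := by rw [← Matrix.mulVec_mulVec]
        _ = B.mulVec 0 := by rw [hKu]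
        _ = 0 := Matrix.mulVec_zero B
    exact congrFun this i
  -- derivative of a relation is a relation
  have relB : ∀ c : Fin N × Fin ℓ → F, W.mulVec c = 0 →
      W.mulVec (fun q => d (c q)) = 0 := by
    intro c hc
    funext p
    obtain ⟨k, i⟩ := p
    have h1 : d (∑ q, c q * d^[(k : ℕ)] (Fb q i)) = 0 := by
      rw [relA c hc k (le_of_lt k.isLt) i, hd0]
    have h2 : d (∑ q, c q * d^[(k : ℕ)] (Fb q i)) =
        ∑ q, (d (c q) * d^[(k : ℕ)] (Fb q i) + c q * d^[(k : ℕ) + 1] (Fb q i)) := by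
      have := map_sum D (fun q => c q * d^[(k : ℕ)] (Fb q i)) Finset.univ
      rw [show (D : F → F) = d from rfl] at this
      rw [this]
      congr 1; funext q
      rw [hd_mul, Function.iterate_succ_apply' d (k : ℕ) (Fb q i)]
    rw [Finset.sum_add_distrib] at h2
    have h3 : ∑ q, c q * d^[(k : ℕ) + 1] (Fb q i) = 0 := relA c hc ((k : ℕ) + 1) k.isLt i
    rw [h3, add_zero] at h2
    have h4 : ∑ q, d (c q) * d^[(k : ℕ)] (Fb q i) = 0 := by rw [← h2, h1]
    show ∑ q, W (k, i) q * d (c q) = 0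
    simpa [W, mul_comm] using h4
  -- main induction on support size: kernel of W is trivial
  have key : ∀ n : ℕ, ∀ c : Fin N × Fin ℓ → F,
      (Finset.univ.filter fun q => c q ≠ 0).card ≤ n → W.mulVec c = 0 → c = 0 := by
    intro n
    induction n with
    | zero =>
      intro c hcard _
      funext q
      simp only [Pi.zero_apply]
      by_contra hq
      have : q ∈ Finset.univ.filter fun q => c q ≠ 0 := by simp [hq]
      have := Finset.card_pos.mpr ⟨q, this⟩
      omega
    | succ n ih =>
      intro c hcard hc
      by_contra hc0
      obtain ⟨q₀, hq₀⟩ : ∃ q, c q ≠ 0 := by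
        by_contra h
        push_neg at h
        exact hc0 (funext fun q => h q)
      set c' : Fin N × Fin ℓ → F := fun q => (c q₀)⁻¹ * c q with hc'def
      have hc' : W.mulVec c' = 0 := by
        have : c' = (c q₀)⁻¹ • c := rfl
        rw [this, Matrix.mulVec_smul, hc, smul_zero]
      have hc'q₀ : c' q₀ = 1 := by
        simp [hc'def, inv_mul_cancel₀ hq₀]
      have hd' : W.mulVec (fun q => d (c' q)) = 0 := relB c' hc'
      -- support of d ∘ c' is strictly smaller
      have hsub : (Finset.univ.filter fun q => d (c' q) ≠ 0) ⊆
          (Finset.univ.filter fun q => c q ≠ 0) \ {q₀} := by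
        intro q hq
        simp only [Finset.mem_filter, Finset.mem_univ, true_and] at hq
        simp only [Finset.mem_sdiff, Finset.mem_filter, Finset.mem_univ, true_and,
          Finset.mem_singleton]
        constructor
        · intro h
          apply hq
          rw [hc'def]
          simp [h, hd0]
        · intro h
          apply hq
          rw [h, hc'q₀, hd1]
      have hq₀mem : q₀ ∈ Finset.univ.filter fun q => c q ≠ 0 := by simp [hq₀]
      have hcard' : (Finset.univ.filter fun q => d (c' q) ≠ 0).card ≤ n := by
        have h1 := Finset.card_le_card hsub
        have h2 : ((Finset.univ.filter fun q => c q ≠ 0) \ {q₀}).card =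
            (Finset.univ.filter fun q => c q ≠ 0).card - 1 := by
          rw [Finset.card_sdiff_of_subset (by simpa using hq₀mem)]
          simp
        omega
      have hdc0 : (fun q => d (c' q)) = 0 := ih _ hcard' hd'
      have hconst : ∀ q, d (c' q) = 0 := fun q => congrFun hdc0 q
      have hrel0 : ∀ i, ∑ q, c' q * Fb q i = 0 := by
        intro i
        have := relA c' hc' 0 (Nat.zero_le N) i
        simpa using this
      have := hindep c' hconst hrel0
      rw [this] at hc'q₀
      simp at hc'q₀
  -- conclude
  rw [Matrix.isUnit_iff_isUnit_det, isUnit_iff_ne_zero]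
  intro hdet
  obtain ⟨v, hv0, hv⟩ := Matrix.exists_mulVec_eq_zero_iff.mpr hdet
  exact hv0 (key _ v le_rfl hv)
end

section
/- Let V be an algebra of differential functions extending the algebra of differential polynomials R_ℓ over a differential field F of quasiconstants. If K(∂) is an ℓ×ℓ matrix differential operator with quasiconstant coefficients, order N, and invertible leading coefficient K_N ∈ Mat_{ℓ×ℓ}(F), then every solution F ∈ V^ℓ of K(∂)F = 0 has all components in F, i.e., ker(K(∂): V^ℓ → V^ℓ) = ker(K(∂)|_{F^ℓ}). -/
/-!
Apply `∂/∂u_i^{(M+N)}` to `K(∂)F = 0`, where `M` is an order above which no component of `F`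
depends on any variable. Since `[∂/∂u_i^{(n)}, ∂] = ∂/∂u_i^{(n-1)}` and the coefficients are
quasiconstant, only the leading term survives, giving `K_N (∂F/∂u_i^{(M)}) = 0`. Invertibility of
`K_N` kills `∂F/∂u_i^{(M)}`, and descending induction on `M` shows that `F` is quasiconstant.
-/

/-- An algebra of differential functions in `ℓ` variables `u_1,…,u_ℓ`: a commutative
differential algebra `(V, d)` with commuting derivations `pd i n = ∂/∂u_i^{(n)}`, each
element depending on finitely many variables, satisfying the commutation rules
`[∂/∂u_i^{(n)}, ∂] = ∂/∂u_i^{(n−1)}`, and containing the differential variables `u_i`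
(so that `V` extends the algebra of differential polynomials `R_ℓ`). -/
structure ADF (ℓ : ℕ) (V : Type) [CommRing V] where
  d : V → V
  d_add : ∀ a b, d (a + b) = d a + d b
  d_mul : ∀ a b, d (a * b) = d a * b + a * d b
  pd : Fin ℓ → ℕ → V → V
  pd_add : ∀ i n a b, pd i n (a + b) = pd i n a + pd i n b
  pd_mul : ∀ i n a b, pd i n (a * b) = pd i n a * b + a * pd i n b
  pd_comm : ∀ i n j m f, pd i n (pd j m f) = pd j m (pd i n f)
  finite_dep : ∀ f : V, ∃ M : ℕ, ∀ i n, M ≤ n → pd i n f = 0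
  pd_d : ∀ i n f, pd i (n + 1) (d f) = d (pd i (n + 1) f) + pd i n f
  pd_d0 : ∀ i f, pd i 0 (d f) = d (pd i 0 f)
  u : Fin ℓ → V
  pd_u : ∀ i n j m, pd i n (d^[m] (u j)) = if i = j ∧ n = m then 1 else 0

/-- `f` is a quasiconstant: all the partial derivatives `∂f/∂u_i^{(n)}` vanish. -/
def ADF.quasi {ℓ : ℕ} {V : Type} [CommRing V] (A : ADF ℓ V) (f : V) : Prop :=
  ∀ i n, A.pd i n f = 0

theorem Nat.forall_of_forall_ge_of_forall_gt_imp {P : ℕ → Prop} (M : ℕ)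
    (hge : ∀ n, M ≤ n → P n) (hstep : ∀ n, (∀ m, n < m → P m) → P n) (n : ℕ) : P n := by
  suffices ∀ k n, M ≤ n + k → P n from this M n (by omega)
  intro k
  induction k with
  | zero => exact hge
  | succ k ih => exact fun n _ => hstep n fun m hm => ih m (by omega)

open Matrix

namespace ADF

variable {ℓ : ℕ} {V : Type} [CommRing V] (A : ADF ℓ V)

lemma d_zero : A.d 0 = 0 := by
  simpa using A.d_add 0 0

def pdHom (i : Fin ℓ) (n : ℕ) : V →+ V where
  toFun := A.pd i n
  map_zero' := by simpa using A.pd_add i n 0 0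
  map_add' := A.pd_add i n

lemma pd_zero (i : Fin ℓ) (n : ℕ) : A.pd i n 0 = 0 :=
  map_zero (A.pdHom i n)

lemma pd_sum {ι : Type*} (i : Fin ℓ) (n : ℕ) (s : Finset ι) (f : ι → V) :
    A.pd i n (∑ x ∈ s, f x) = ∑ x ∈ s, A.pd i n (f x) :=
  map_sum (A.pdHom i n) f s

lemma pd_mul_of_quasi {c : V} (hc : A.quasi c) (i : Fin ℓ) (n : ℕ) (f : V) :
    A.pd i n (c * f) = c * A.pd i n f := by
  rw [A.pd_mul, hc, zero_mul, zero_add]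

lemma exists_pd_eq_zero_of_le {ι : Type*} [Finite ι] (f : ι → V) :
    ∃ M, ∀ j i n, M ≤ n → A.pd i n (f j) = 0 := by
  choose M hM using fun j => A.finite_dep (f j)
  obtain ⟨B, hB⟩ := (Set.finite_range M).bddAbove
  exact ⟨B, fun j i n hn => hM j i n ((hB ⟨j, rfl⟩).trans hn)⟩

section Iterate

variable {A} {i : Fin ℓ} {f : V} {M : ℕ}

lemma pd_iterate_d_eq_zero (h : ∀ m, M < m → A.pd i m f = 0) (n : ℕ) :
    ∀ m, M + n < m → A.pd i m (A.d^[n] f) = 0 := by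
  induction n with
  | zero => exact fun m hm => h m (by omega)
  | succ n ih =>
    rintro (_ | m) hm
    · omega
    rw [Function.iterate_succ_apply', A.pd_d, ih m (by omega), ih (m + 1) (by omega),
      A.d_zero, zero_add]

lemma pd_add_iterate_d (h : ∀ m, M < m → A.pd i m f = 0) (n : ℕ) :
    A.pd i (M + n) (A.d^[n] f) = A.pd i M f := by
  induction n with
  | zero => rfl
  | succ n ih =>
    rw [Function.iterate_succ_apply', ← add_assoc, A.pd_d,
      pd_iterate_d_eq_zero h n _ (by omega), A.d_zero, zero_add, ih]

end Iterate

lemma pd_add_order_op {N : ℕ} (K : Fin (N + 1) → Matrix (Fin ℓ) (Fin ℓ) V)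
    (hKq : ∀ n i j, A.quasi (K n i j)) (Fv : Fin ℓ → V) {i : Fin ℓ} {M : ℕ}
    (hvan : ∀ j m, M < m → A.pd i m (Fv j) = 0) (r : Fin ℓ) :
    A.pd i (M + N) (∑ n : Fin (N + 1), ∑ j, K n r j * A.d^[(n : ℕ)] (Fv j)) =
      (K (Fin.last N) *ᵥ fun j => A.pd i M (Fv j)) r := by
  have hlow : ∀ n : Fin N, ∀ j, A.pd i (M + N) (A.d^[(n : ℕ)] (Fv j)) = 0 := fun n j =>
    pd_iterate_d_eq_zero (hvan j) n _ (by omega)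
  rw [Fin.sum_univ_castSucc, A.pd_add]
  simp only [pd_sum, pd_mul_of_quasi _ (hKq _ _ _), Fin.val_castSucc, hlow, mul_zero,
    Finset.sum_const_zero, zero_add, Fin.val_last, pd_add_iterate_d (hvan _), Matrix.mulVec,
    dotProduct]

end ADF

theorem stmt_10_general {ℓ N : ℕ} {V : Type} [CommRing V] (A : ADF ℓ V)
    (K : Fin (N + 1) → Matrix (Fin ℓ) (Fin ℓ) V)
    (hKq : ∀ n i j, A.quasi (K n i j))
    (L : Matrix (Fin ℓ) (Fin ℓ) V)
    (hLK : L * K (Fin.last N) = 1) :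
    ∀ Fv : Fin ℓ → V,
      (∀ i, ∑ n : Fin (N + 1), ∑ j, K n i j * A.d^[(n : ℕ)] (Fv j) = 0) →
      ∀ j, A.quasi (Fv j) := by
  intro Fv hFv j i n
  obtain ⟨M₀, hM₀⟩ := A.exists_pd_eq_zero_of_le Fv
  refine Nat.forall_of_forall_ge_of_forall_gt_imp (P := fun m => ∀ i j, A.pd i m (Fv j) = 0)
    M₀ (fun m hm i j => hM₀ j i m hm) (fun m hvan i => ?_) n i j
  set w : Fin ℓ → V := fun j => A.pd i m (Fv j)
  have hKw : K (Fin.last N) *ᵥ w = 0 := funext fun r => by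
    rw [← A.pd_add_order_op K hKq Fv (fun j m' hm' => hvan m' hm' i j), hFv r, A.pd_zero]
    rfl
  have hw : w = 0 := by
    rw [← Matrix.one_mulVec w, ← hLK, ← Matrix.mulVec_mulVec, hKw, Matrix.mulVec_zero]
  exact congrFun hw

/-- let `V` be an algebra of differential functions extending `R_ℓ`
over a differential field `F` of quasiconstants.  If `K(∂)` is a quasiconstant
ℓ×ℓ matrix differential operator of order `N` with invertible leading coefficient
`K_N ∈ Mat_{ℓ×ℓ}(F)`, then every solution `Fv ∈ V^ℓ` of `K(∂)Fv = 0` has all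
components quasiconstant, i.e. `ker(K(∂):V^ℓ→V^ℓ) = ker(K(∂)|_{F^ℓ})`. -/
theorem stmt_10 {ℓ N : ℕ} {V : Type} [CommRing V] [CharZero V] (A : ADF ℓ V)
    (hFfield : ∀ f, A.quasi f → f ≠ 0 → ∃ g, A.quasi g ∧ f * g = 1)
    (K : Fin (N + 1) → Matrix (Fin ℓ) (Fin ℓ) V)
    (hKq : ∀ n i j, A.quasi (K n i j))
    (L : Matrix (Fin ℓ) (Fin ℓ) V)
    (hLq : ∀ i j, A.quasi (L i j))
    (hKL : K (Fin.last N) * L = 1) (hLK : L * K (Fin.last N) = 1) :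
    ∀ Fv : Fin ℓ → V,
      (∀ i, ∑ n : Fin (N + 1), ∑ j, K n i j * A.d^[(n : ℕ)] (Fv j) = 0) →
      ∀ j, A.quasi (Fv j) :=
  stmt_10_general A K hKq L hLK
end

section
/- Let g = ⨁_{k≥−1} g_k be a Z-graded Lie superalgebra with associated Casimir space g_{−1}. Define, inside a differential-graded context with differential d = ad K where K ∈ g₁ is odd with [K,K] = 0: Z^k = ker(d|_{g_k}), B^k = d(g_{k−1}), and inductively EZ^{−1} = 0, EZ^k = {z ∈ Z^k : [z, Z^{−1}] ⊆ EZ^{k−1}}. Then: (a) the essential elements EW = ⨁_k EW_k, where EW_k = {P ∈ g_k : [⋯[[P,C₀],C₁],…,C_k] = 0 for all C₀,…,C_k ∈ Z^{−1}}, form a Z-graded subalgebra of g; (b) every exact element is essentially closed, i.e., B^k ⊆ Z^k ∩ EW_k for all k. -/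
/-!
Let `A_t` be the additive group of elements killed by every `t` successive right brackets with
Casimirs; an element of `g_k` is essential exactly when it lies in `A_{k+1}`. The graded Jacobi
identity `[[P,Q],C] = [P,[Q,C]] ± [Q,[P,C]]` and induction on `s + t` give
`[A_{s+1}, A_{t+1}] ⊆ A_{s+t+1}` on homogeneous elements, which is (a). For (b), `ad K` commutes
with `ad C` whenever `[K,C] = 0`, so `ad K` preserves every `A_t`, and `P ∈ g_{k-1}` lies in
`A_{k+1}` because `k + 1` brackets with Casimirs land in `g_{-2} = 0`. Finally
`2 [K,[K,P]] = [[K,K],P] = 0`.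
-/

/-- Iterated bracket `[⋯[[a,C₀],C₁],…,C_k]`. -/
def iterBr {L : Type} (B : L → L → L) (a : L) (C : ℕ → L) : ℕ → L
  | 0 => B a (C 0)
  | n + 1 => B (iterBr B a C n) (C (n + 1))

/-- An element `P ∈ g_k` (`k ≥ 0`) is essential (relative to the Hamiltonian `K`) if
all iterated brackets `[⋯[[P,C₀],C₁],…,C_k]` with `C₀,…,C_k` Casimirs (elements of
`Z^{−1} = {C ∈ g_{−1} : [K,C] = 0}`) vanish. -/
def Essential {C L : Type} [Field C] [AddCommGroup L] [Module C L]
    (g : ℤ → Submodule C L) (B : L → L → L) (K : L) (k : ℕ) (P : L) : Prop :=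
  P ∈ g (k : ℤ) ∧
    ∀ Cs : ℕ → L, (∀ n, Cs n ∈ g (-1) ∧ B K (Cs n) = 0) → iterBr B P Cs k = 0

lemma iterBr_succ_eq {L : Type} (B : L → L → L) (P : L) (Cs : ℕ → L) :
    ∀ n, iterBr B P Cs (n + 1) = iterBr B (B P (Cs 0)) (fun i => Cs (i + 1)) n
  | 0 => rfl
  | n + 1 => congrArg (B · (Cs (n + 2))) (iterBr_succ_eq B P Cs n)

section Annihilator

variable {L : Type} [AddCommGroup L] (β : L →+ L →+ L) (S : Set L)

def iterAnnihilator : ℕ → AddSubgroup L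
  | 0 => ⊥
  | t + 1 => ⨅ c ∈ S, (iterAnnihilator t).comap (β.flip c)

variable {β S}

@[simp]
lemma mem_iterAnnihilator_zero {P : L} : P ∈ iterAnnihilator β S 0 ↔ P = 0 :=
  AddSubgroup.mem_bot

lemma mem_iterAnnihilator_succ {t : ℕ} {P : L} :
    P ∈ iterAnnihilator β S (t + 1) ↔ ∀ c ∈ S, β P c ∈ iterAnnihilator β S t := by
  simp [iterAnnihilator, AddSubgroup.mem_iInf]

lemma forall_iterBr_eq_zero_iff {n : ℕ} {P : L} :
    (∀ Cs : ℕ → L, (∀ i, Cs i ∈ S) → iterBr (fun x y => β x y) P Cs n = 0) ↔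
      P ∈ iterAnnihilator β S (n + 1) := by
  induction n generalizing P with
  | zero =>
    simp only [mem_iterAnnihilator_succ, mem_iterAnnihilator_zero, iterBr]
    exact ⟨fun h c hc => h (fun _ => c) fun _ => hc, fun h Cs hCs => h _ (hCs 0)⟩
  | succ n ih =>
    simp only [mem_iterAnnihilator_succ (t := n + 1), ← ih, iterBr_succ_eq]
    refine ⟨fun h c hc Cs hCs => ?_, fun h Cs hCs => h _ (hCs 0) _ fun i => hCs (i + 1)⟩
    exact h (Stream'.cons c Cs) fun | 0 => hc | i + 1 => hCs i

end Annihilator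

section Graded

open SetLike

variable {R L : Type} [Semiring R] [AddCommGroup L] [Module R L] {g : ℤ → Submodule R L}
  {β : L →+ L →+ L} {S : Set L}
  (hgrad : ∀ (p q : ℤ) (x y : L), x ∈ g p → y ∈ g q → β x y ∈ g (p + q))
  (hJac : ∀ (p q : ℤ) (x y z : L), x ∈ g p → y ∈ g q →
    β x (β y z) = β (β x y) z + (if Even (p * q) then β y (β x z) else -β y (β x z)))

include hgrad in
lemma isHomogeneousElem_bracket {x y : L} (hx : IsHomogeneousElem g x)
    (hy : IsHomogeneousElem g y) : IsHomogeneousElem g (β x y) :=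
  let ⟨p, hp⟩ := hx
  let ⟨q, hq⟩ := hy
  ⟨p + q, hgrad p q x y hp hq⟩

include hJac in
lemma bracket_bracket_mem_of_mem {A : AddSubgroup L} {x y z : L} (hx : IsHomogeneousElem g x)
    (hy : IsHomogeneousElem g y) (hxyz : β x (β y z) ∈ A) (hyxz : β y (β x z) ∈ A) :
    β (β x y) z ∈ A := by
  obtain ⟨p, hp⟩ := hx
  obtain ⟨q, hq⟩ := hy
  rw [eq_sub_of_add_eq (hJac p q x y z hp hq).symm]
  refine A.sub_mem hxyz ?_
  split_ifs
  exacts [hyxz, A.neg_mem hyxz]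

include hgrad hJac in
theorem bracket_mem_iterAnnihilator (hS : ∀ c ∈ S, IsHomogeneousElem g c) {s t : ℕ} {P Q : L}
    (hP : IsHomogeneousElem g P) (hQ : IsHomogeneousElem g Q)
    (hPs : P ∈ iterAnnihilator β S (s + 1)) (hQt : Q ∈ iterAnnihilator β S (t + 1)) :
    β P Q ∈ iterAnnihilator β S (s + t + 1) := by
  rw [mem_iterAnnihilator_succ]
  intro c hc
  refine bracket_bracket_mem_of_mem hJac hP hQ ?_ ?_
  · match t, hQt with
    | 0, hQt =>
      rw [mem_iterAnnihilator_zero.1 (mem_iterAnnihilator_succ.1 hQt c hc), map_zero]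
      exact zero_mem _
    | t + 1, hQt =>
      exact bracket_mem_iterAnnihilator hS hP (isHomogeneousElem_bracket hgrad hQ (hS c hc))
        hPs (mem_iterAnnihilator_succ.1 hQt c hc)
  · match s, hPs with
    | 0, hPs =>
      rw [mem_iterAnnihilator_zero.1 (mem_iterAnnihilator_succ.1 hPs c hc), map_zero]
      exact zero_mem _
    | s + 1, hPs =>
      rw [show s + 1 + t = t + s + 1 by omega]
      exact bracket_mem_iterAnnihilator hS hQ (isHomogeneousElem_bracket hgrad hP (hS c hc))
        hQt (mem_iterAnnihilator_succ.1 hPs c hc)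
termination_by s + t

include hgrad hJac in
theorem bracket_mem_iterAnnihilator_of_commute (hS : ∀ c ∈ S, IsHomogeneousElem g c) {K : L}
    (hK : IsHomogeneousElem g K) (hKS : ∀ c ∈ S, β K c = 0) {t : ℕ} {P : L}
    (hP : IsHomogeneousElem g P) (hPt : P ∈ iterAnnihilator β S t) :
    β K P ∈ iterAnnihilator β S t := by
  induction t generalizing P with
  | zero => simp_all
  | succ t ih =>
    rw [mem_iterAnnihilator_succ] at hPt ⊢
    intro c hc
    refine bracket_bracket_mem_of_mem hJac hK hP
      (ih (isHomogeneousElem_bracket hgrad hP (hS c hc)) (hPt c hc)) ?_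
    rw [hKS c hc, map_zero]
    exact zero_mem _

include hgrad in
theorem mem_iterAnnihilator_of_lt (hbot : ∀ k : ℤ, k < -1 → g k = ⊥)
    (hS : ∀ c ∈ S, c ∈ g (-1)) {t : ℕ} {p : ℤ} {P : L} (hP : P ∈ g p)
    (hpt : p + 1 < t) :
    P ∈ iterAnnihilator β S t := by
  induction t generalizing p P with
  | zero =>
    rw [hbot p (by omega)] at hP
    simpa using hP
  | succ t ih =>
    rw [mem_iterAnnihilator_succ]
    exact fun c hc => ih (hgrad p (-1) P c hP (hS c hc)) (by omega)

include hJac in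
theorem bracket_bracket_eq_zero_of_odd [IsAddTorsionFree L] {K : L} {p : ℤ} (hK : K ∈ g p)
    (hp : Odd p) (hKK : β K K = 0) (P : L) : β K (β K P) = 0 := by
  have hJacK := hJac p p K K P hK hK
  rw [hKK, map_zero, AddMonoidHom.zero_apply, zero_add,
    if_neg (by simpa [Int.even_mul] using hp)] at hJacK
  exact self_eq_neg.1 hJacK

end Graded

lemma essential_iff {C L : Type} [Field C] [AddCommGroup L] [Module C L] {g : ℤ → Submodule C L}
    {β : L →+ L →+ L} (K : L) {k : ℕ} {P : L} :
    Essential g (fun x y => β x y) K k P ↔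
      P ∈ g k ∧ P ∈ iterAnnihilator β {c | c ∈ g (-1) ∧ β K c = 0} (k + 1) :=
  and_congr_right' (forall_iterBr_eq_zero_iff (S := {c | c ∈ g (-1) ∧ β K c = 0}))

theorem stmt_14_general {C L : Type} [Field C] [CharZero C] [AddCommGroup L] [Module C L]
    (g : ℤ → Submodule C L) (B : L → L → L)
    (hB_addl : ∀ x y z : L, B (x + y) z = B x z + B y z)
    (hB_addr : ∀ x y z : L, B x (y + z) = B x y + B x z)
    (hgrad : ∀ (p q : ℤ) (x y : L), x ∈ g p → y ∈ g q → B x y ∈ g (p + q))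
    (hbot : ∀ k : ℤ, k < -1 → g k = ⊥)
    (hJac : ∀ (p q : ℤ) (x y z : L), x ∈ g p → y ∈ g q →
      B x (B y z) = B (B x y) z + (if Even (p * q) then B y (B x z) else -B y (B x z)))
    (K : L) (hK : K ∈ g 1) (hKK : B K K = 0) :
    (∀ (h k : ℕ) (P Q : L), Essential g B K h P → Essential g B K k Q →
      Essential g B K (h + k) (B P Q)) ∧
    (∀ (k : ℕ) (P : L), P ∈ g ((k : ℤ) - 1) →
      B K (B K P) = 0 ∧ Essential g B K k (B K P)) := by
  obtain ⟨β, rfl⟩ : ∃ β : L →+ L →+ L, B = fun x y => β x y :=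
    ⟨.mk' (fun x => .mk' (B x) (hB_addr x)) fun x y => AddMonoidHom.ext (hB_addl x y), rfl⟩
  have hS : ∀ c ∈ {c | c ∈ g (-1) ∧ β K c = 0}, SetLike.IsHomogeneousElem g c :=
    fun _ hc => ⟨-1, hc.1⟩
  refine ⟨fun h k P Q hP hQ => ?_, fun k P hP => ?_⟩
  · rw [essential_iff] at hP hQ ⊢
    exact ⟨by simpa using hgrad h k P Q hP.1 hQ.1,
      bracket_mem_iterAnnihilator hgrad hJac hS ⟨h, hP.1⟩ ⟨k, hQ.1⟩ hP.2 hQ.2⟩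
  · have : IsAddTorsionFree L := .of_isTorsionFree C L
    refine ⟨bracket_bracket_eq_zero_of_odd hJac hK odd_one hKK P,
      (essential_iff K).2 ⟨?_, ?_⟩⟩
    · simpa using hgrad 1 (k - 1) K P hK hP
    · exact bracket_mem_iterAnnihilator_of_commute hgrad hJac hS ⟨1, hK⟩ (fun _ hc => hc.2)
        ⟨_, hP⟩ (mem_iterAnnihilator_of_lt hgrad hbot (fun _ hc => hc.1) hP (by omega))

/-- let `g = ⨁_{k≥−1} g_k` be a ℤ-graded Lie superalgebra (parity of
`g_k` is `k mod 2`), with `[g_{−1},g_{−1}] = 0`, and let `K ∈ g₁` be odd with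
`[K,K] = 0`, giving the differential `d = ad K`.  Then:
(a) the essential elements form a ℤ-graded subalgebra of `g`: the bracket of
    essential elements of degrees `h` and `k` is essential of degree `h + k`;
(b) every exact element is essentially closed: for `P ∈ g_{k−1}`, the element
    `[K,P] ∈ B^k` is closed (`[K,[K,P]] = 0`) and essential. -/
theorem stmt_14 {C L : Type} [Field C] [CharZero C] [AddCommGroup L] [Module C L]
    (g : ℤ → Submodule C L) (B : L → L → L)
    (hB_addl : ∀ x y z : L, B (x + y) z = B x z + B y z)
    (hB_addr : ∀ x y z : L, B x (y + z) = B x y + B x z)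
    (hgrad : ∀ (p q : ℤ) (x y : L), x ∈ g p → y ∈ g q → B x y ∈ g (p + q))
    (hbot : ∀ k : ℤ, k < -1 → g k = ⊥)
    (hskew : ∀ (p q : ℤ) (x y : L), x ∈ g p → y ∈ g q →
      B x y = if Even (p * q) then -B y x else B y x)
    (hJac : ∀ (p q : ℤ) (x y z : L), x ∈ g p → y ∈ g q →
      B x (B y z) = B (B x y) z + (if Even (p * q) then B y (B x z) else -B y (B x z)))
    (hmm : ∀ x y : L, x ∈ g (-1) → y ∈ g (-1) → B x y = 0)
    (K : L) (hK : K ∈ g 1) (hKK : B K K = 0) :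
    (∀ (h k : ℕ) (P Q : L), Essential g B K h P → Essential g B K k Q →
      Essential g B K (h + k) (B P Q)) ∧
    (∀ (k : ℕ) (P : L), P ∈ g ((k : ℤ) - 1) →
      B K (B K P) = 0 ∧ Essential g B K k (B K P)) :=
  stmt_14_general g B hB_addl hB_addr hgrad hbot hJac K hK hKK
end

section
/- Let T be a nondegenerate symmetric ℓ×ℓ matrix over a field C of characteristic zero, n = ℓ+1, and S the n×n matrix [[0,0],[0,T]]. Write Λ(n) with generators η, ξ₁,…,ξ_ℓ. Then the map φ_S : H̃(n,S) → W(n) defined by φ_S(f(ξ)) = {f, ·}_S (for f not involving η) and φ_S(f(ξ)η) = f(ξ)·∂/∂η, is an injective homomorphism of Z-graded Lie superalgebras into the Lie superalgebra W(n) of derivations of Λ(n). -/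
open Matrix

/-- The Grassmann algebra `Λ(n)` over `C`, as coefficient functions on the basis of
monomials indexed by subsets of `Fin n`.  For `n = ℓ+1` the generator indexed by
`0` is `η` and the generators indexed by `i.succ` are `ξ_i`, `i = 1,…,ℓ`. -/
abbrev Grass (n : ℕ) (C : Type) := Finset (Fin n) → C

/-- The Koszul sign for multiplying monomials indexed by disjoint sets `a`, `b`. -/
def gSign {n : ℕ} (C : Type) [Field C] (a b : Finset (Fin n)) : C :=
  (-1 : C) ^ (∑ i ∈ a, (b.filter (· < i)).card)

/-- Multiplication in the Grassmann algebra. -/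
def gMul {n : ℕ} {C : Type} [Field C] (f g : Grass n C) : Grass n C :=
  fun t => ∑ a ∈ t.powerset, gSign C a (t \ a) * f a * g (t \ a)

/-- The odd partial derivative `∂/∂ξ_i`. -/
def gPd {n : ℕ} {C : Type} [Field C] (i : Fin n) (f : Grass n C) : Grass n C :=
  fun t => if i ∈ t then 0
    else (-1 : C) ^ ((t.filter (· < i)).card) * f (insert i t)

/-- `f` is homogeneous of parity `p`. -/
def gHomog {n : ℕ} {C : Type} [Field C] (p : ℕ) (f : Grass n C) : Prop :=
  ∀ s, f s ≠ 0 → s.card % 2 = p % 2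

/-- The Poisson bracket `{f,g}_S` for `f` of parity `p`. -/
def gBr {n : ℕ} {C : Type} [Field C] (S : Matrix (Fin n) (Fin n) C)
    (p : ℕ) (f g : Grass n C) : Grass n C :=
  fun t => (-1 : C) ^ (p + 1) * ∑ i, ∑ j, S i j * gMul (gPd i f) (gPd j g) t

/-- The matrix `S = [[0,0],[0,T]]` on the generators `η, ξ₁,…,ξ_ℓ`. -/
def etaExtend {ℓ : ℕ} {C : Type} [Field C] (T : Matrix (Fin ℓ) (Fin ℓ) C) :
    Matrix (Fin (ℓ + 1)) (Fin (ℓ + 1)) C :=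
  fun i j => if hi : i = 0 then 0 else if hj : j = 0 then 0
    else T (i.pred hi) (j.pred hj)

/-- The `η`-free part `f⁰` in the decomposition `f = f⁰ + f¹η`. -/
def etaFree {ℓ : ℕ} {C : Type} [Field C] (f : Grass (ℓ + 1) C) : Grass (ℓ + 1) C :=
  fun t => if (0 : Fin (ℓ + 1)) ∈ t then 0 else f t

/-- The part `f¹` in the decomposition `f = f⁰ + f¹η` (with `η` written on the right). -/
def etaPart {ℓ : ℕ} {C : Type} [Field C] (f : Grass (ℓ + 1) C) : Grass (ℓ + 1) C :=
  fun t => if (0 : Fin (ℓ + 1)) ∈ t then 0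
    else (-1 : C) ^ t.card * f (insert 0 t)

/-- The map `φ_S`, sending (a representative of) `f ∈ H̃(n,S)`, `f = f⁰ + f¹η` of
parity `p`, to the derivation `{f⁰, ·}_S + f¹ ∂/∂η` of `Λ(n)`. -/
def phiS {ℓ : ℕ} {C : Type} [Field C] (T : Matrix (Fin ℓ) (Fin ℓ) C)
    (p : ℕ) (f : Grass (ℓ + 1) C) : Grass (ℓ + 1) C → Grass (ℓ + 1) C :=
  fun g t => gBr (etaExtend T) p (etaFree f) g t + gMul (etaPart f) (gPd 0 g) t

-- CHUNK1
section Dev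
variable {n : ℕ} {C : Type} [Field C]

lemma negpow_two_mul (k l : ℕ) : (-1 : C) ^ (k + 2 * l) = (-1 : C) ^ k := by
  rw [pow_add, pow_mul, neg_one_sq, one_pow, mul_one]

lemma negpow_parity {m k : ℕ} (h : m % 2 = k % 2) : (-1 : C) ^ m = (-1 : C) ^ k := by
  conv_lhs => rw [← Nat.div_add_mod m 2]
  conv_rhs => rw [← Nat.div_add_mod k 2]
  rw [pow_add, pow_mul, neg_one_sq, one_pow, pow_add, pow_mul, neg_one_sq, one_pow, h]

def gDelta {n : ℕ} (C : Type) [Field C] (a : Finset (Fin n)) : Grass n C :=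
  fun t => if t = a then 1 else 0

lemma gSign_empty_right (a : Finset (Fin n)) : gSign C a ∅ = 1 := by simp [gSign]

lemma gSign_empty_left (b : Finset (Fin n)) : gSign C ∅ b = 1 := by simp [gSign]

lemma gSign_union_left {a b : Finset (Fin n)} (h : Disjoint a b) (c : Finset (Fin n)) :
    gSign C (a ∪ b) c = gSign C a c * gSign C b c := by
  rw [gSign, gSign, gSign, Finset.sum_union h, pow_add]

lemma gSign_union_right {b c : Finset (Fin n)} (h : Disjoint b c) (a : Finset (Fin n)) :
    gSign C a (b ∪ c) = gSign C a b * gSign C a c := by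
  unfold gSign
  rw [← pow_add, ← Finset.sum_add_distrib]
  congr 1
  refine Finset.sum_congr rfl fun i _ => ?_
  rw [Finset.filter_union, Finset.card_union_of_disjoint (Finset.disjoint_filter_filter h)]

lemma gSign_single_left (i : Fin n) (b : Finset (Fin n)) :
    gSign C {i} b = (-1 : C) ^ (b.filter (· < i)).card := by simp [gSign]

lemma gSign_single_right (i : Fin n) (a : Finset (Fin n)) :
    gSign C a {i} = (-1 : C) ^ (a.filter (i < ·)).card := by
  unfold gSign
  congr 1
  rw [Finset.card_filter]
  refine Finset.sum_congr rfl fun x _ => ?_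
  by_cases h : i < x <;> simp [Finset.filter_singleton, h]

lemma gSign_insert_right {i : Fin n} {b : Finset (Fin n)} (h : i ∉ b) (a : Finset (Fin n)) :
    gSign C a (insert i b) = gSign C a {i} * gSign C a b := by
  rw [Finset.insert_eq, gSign_union_right (Finset.disjoint_singleton_left.mpr h)]

lemma gSign_insert_left {i : Fin n} {a : Finset (Fin n)} (h : i ∉ a) (b : Finset (Fin n)) :
    gSign C (insert i a) b = gSign C {i} b * gSign C a b := by
  rw [Finset.insert_eq, gSign_union_left (Finset.disjoint_singleton_left.mpr h)]

lemma gSign_mul_self (a b : Finset (Fin n)) : gSign C a b * gSign C a b = 1 := by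
  unfold gSign
  rw [← pow_add, ← two_mul, pow_mul, neg_one_sq, one_pow]

lemma filter_lt_card_add {a : Finset (Fin n)} {i : Fin n} (h : i ∉ a) :
    (a.filter (· < i)).card + (a.filter (i < ·)).card = a.card := by
  have he : a.filter (i < ·) = a.filter (fun x => ¬ x < i) := by
    apply Finset.filter_congr
    intro x hx
    have hne : x ≠ i := fun e => h (e ▸ hx)
    constructor
    · intro hlt; exact not_lt.mpr hlt.le
    · intro hnl; exact lt_of_le_of_ne (not_lt.mp hnl) (Ne.symm hne)
  rw [he, Finset.card_filter_add_card_filter_not]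

lemma filter_card_sdiff {a t : Finset (Fin n)} (h : a ⊆ t) (i : Fin n) :
    (t.filter (· < i)).card = (a.filter (· < i)).card + ((t \ a).filter (· < i)).card := by
  conv_lhs => rw [← Finset.union_sdiff_of_subset h]
  rw [Finset.filter_union, Finset.card_union_of_disjoint
    (Finset.disjoint_filter_filter Finset.disjoint_sdiff)]

lemma gSign_mul_gSign {a b : Finset (Fin n)} (h : Disjoint a b) :
    gSign C a b * gSign C b a = (-1 : C) ^ (a.card * b.card) := by
  unfold gSign
  rw [← pow_add]
  congr 1
  have h1 : ∀ i ∈ a, (b.filter (· < i)).card + (b.filter (i < ·)).card = b.card :=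
    fun i hi => filter_lt_card_add (Finset.disjoint_left.mp h hi)
  have e1 : ∑ i ∈ a, (b.filter (· < i)).card + ∑ i ∈ a, (b.filter (i < ·)).card
      = a.card * b.card := by
    rw [← Finset.sum_add_distrib, Finset.sum_congr rfl h1, Finset.sum_const, smul_eq_mul]
  have e2 : ∑ j ∈ b, (a.filter (· < j)).card = ∑ i ∈ a, (b.filter (i < ·)).card := by
    simp only [Finset.card_filter]
    rw [Finset.sum_comm]
  omega

lemma gSign_comm {a b : Finset (Fin n)} (h : Disjoint a b) :
    gSign C a b = (-1 : C) ^ (a.card * b.card) * gSign C b a := by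
  calc gSign C a b = gSign C a b * (gSign C b a * gSign C b a) := by
        rw [gSign_mul_self, mul_one]
    _ = (gSign C a b * gSign C b a) * gSign C b a := by ring
    _ = _ := by rw [gSign_mul_gSign h]

lemma gMul_delta_l (a : Finset (Fin n)) (g : Grass n C) :
    gMul (gDelta C a) g = fun t => if a ⊆ t then gSign C a (t \ a) * g (t \ a) else 0 := by
  funext t
  unfold gMul gDelta
  simp only [mul_ite, mul_one, mul_zero, ite_mul, zero_mul]
  rw [Finset.sum_ite_eq' t.powerset a fun c => gSign C c (t \ c) * g (t \ c)]
  simp [Finset.mem_powerset]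

lemma gMul_delta_r (b : Finset (Fin n)) (f : Grass n C) :
    gMul f (gDelta C b) = fun t => if b ⊆ t then gSign C (t \ b) b * f (t \ b) else 0 := by
  funext t
  unfold gMul gDelta
  by_cases hb : b ⊆ t
  · rw [if_pos hb, Finset.sum_eq_single_of_mem (t \ b)
      (Finset.mem_powerset.mpr Finset.sdiff_subset)]
    · rw [Finset.sdiff_sdiff_eq_self hb]
      simp [mul_comm]
    · intro c hc hne
      have : t \ c ≠ b := fun e => hne (by rw [← e, Finset.sdiff_sdiff_eq_self (Finset.mem_powerset.mp hc)])
      simp [this]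
  · rw [if_neg hb]
    apply Finset.sum_eq_zero
    intro c hc
    have : t \ c ≠ b := fun e => hb (e ▸ Finset.sdiff_subset)
    simp [this]

lemma gMul_one_r (f : Grass n C) : gMul f (gDelta C ∅) = f := by
  funext t
  rw [gMul_delta_r]
  simp [gSign_empty_right]

lemma gPd_delta (i : Fin n) (a : Finset (Fin n)) :
    gPd i (gDelta C a) = fun t => if i ∈ a ∧ t = a.erase i
      then (-1 : C) ^ ((a.filter (· < i)).card) else 0 := by
  funext t
  unfold gPd gDelta
  by_cases hit : i ∈ t
  · have hcon : ¬(i ∈ a ∧ t = a.erase i) := fun ⟨_, ht⟩ => (Finset.notMem_erase i a) (ht ▸ hit)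
    rw [if_pos hit, if_neg hcon]
  · rw [if_neg hit]
    by_cases h : insert i t = a
    · have hia : i ∈ a := h ▸ Finset.mem_insert_self i t
      have hte : t = a.erase i := by rw [← h, Finset.erase_insert hit]
      rw [if_pos h, mul_one, if_pos ⟨hia, hte⟩, hte, Finset.filter_erase,
        Finset.erase_eq_of_notMem (by simp)]
    · have hcon : ¬(i ∈ a ∧ t = a.erase i) := fun ⟨hia, hte⟩ => h (by rw [hte, Finset.insert_erase hia])
      rw [if_neg h, mul_zero, if_neg hcon]

lemma gDelta_expand (f : Grass n C) :
    f = fun t => ∑ s ∈ (Finset.univ : Finset (Fin n)).powerset, f s * gDelta C s t := by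
  funext t
  simp only [gDelta, mul_ite, mul_one, mul_zero]
  rw [Finset.sum_ite_eq]
  simp [Finset.mem_powerset]

-- pushers
lemma gMul_sum_l {ι : Type} (A : Finset ι) (F : ι → Grass n C) (g : Grass n C) :
    gMul (fun u => ∑ s ∈ A, F s u) g = fun t => ∑ s ∈ A, gMul (F s) g t := by
  funext t
  unfold gMul
  simp only [Finset.sum_mul, Finset.mul_sum]
  exact Finset.sum_comm

lemma gMul_sum_r {ι : Type} (A : Finset ι) (F : ι → Grass n C) (f : Grass n C) :
    gMul f (fun u => ∑ s ∈ A, F s u) = fun t => ∑ s ∈ A, gMul f (F s) t := by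
  funext t
  unfold gMul
  simp only [Finset.sum_mul, Finset.mul_sum]
  exact Finset.sum_comm

lemma gMul_smul_l (c : C) (f g : Grass n C) :
    gMul (fun u => c * f u) g = fun t => c * gMul f g t := by
  funext t
  unfold gMul
  rw [Finset.mul_sum]
  exact Finset.sum_congr rfl fun a _ => by ring

lemma gMul_smul_r (c : C) (f g : Grass n C) :
    gMul f (fun u => c * g u) = fun t => c * gMul f g t := by
  funext t
  unfold gMul
  rw [Finset.mul_sum]
  exact Finset.sum_congr rfl fun a _ => by ring

lemma gMul_add_l (f f' g : Grass n C) :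
    gMul (fun u => f u + f' u) g = fun t => gMul f g t + gMul f' g t := by
  funext t
  unfold gMul
  rw [← Finset.sum_add_distrib]
  exact Finset.sum_congr rfl fun a _ => by ring

lemma gMul_add_r (f g g' : Grass n C) :
    gMul f (fun u => g u + g' u) = fun t => gMul f g t + gMul f g' t := by
  funext t
  unfold gMul
  rw [← Finset.sum_add_distrib]
  exact Finset.sum_congr rfl fun a _ => by ring

lemma gMul_sub_r (f g g' : Grass n C) :
    gMul f (fun u => g u - g' u) = fun t => gMul f g t - gMul f g' t := by
  funext t
  unfold gMul
  rw [← Finset.sum_sub_distrib]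
  exact Finset.sum_congr rfl fun a _ => by ring

lemma gMul_neg_r (f g : Grass n C) :
    gMul f (fun u => -(g u)) = fun t => -(gMul f g t) := by
  funext t
  unfold gMul
  rw [← Finset.sum_neg_distrib]
  exact Finset.sum_congr rfl fun a _ => by ring

lemma gMul_zero_l (g : Grass n C) : gMul (fun _ => (0 : C)) g = fun _ => 0 := by
  funext t; unfold gMul; simp

lemma gMul_zero_r (f : Grass n C) : gMul f (fun _ => (0 : C)) = fun _ => 0 := by
  funext t; unfold gMul; simp

lemma gPd_sum {ι : Type} (i : Fin n) (A : Finset ι) (F : ι → Grass n C) :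
    gPd i (fun u => ∑ s ∈ A, F s u) = fun t => ∑ s ∈ A, gPd i (F s) t := by
  funext t
  by_cases h : i ∈ t <;> simp [gPd, h, Finset.mul_sum]

lemma gPd_smul (i : Fin n) (c : C) (f : Grass n C) :
    gPd i (fun u => c * f u) = fun t => c * gPd i f t := by
  funext t
  by_cases h : i ∈ t <;> simp [gPd, h] <;> ring

lemma gPd_add (i : Fin n) (f g : Grass n C) :
    gPd i (fun u => f u + g u) = fun t => gPd i f t + gPd i g t := by
  funext t
  by_cases h : i ∈ t <;> simp [gPd, h] <;> ring

lemma gPd_neg (i : Fin n) (f : Grass n C) :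
    gPd i (fun u => -(f u)) = fun t => -(gPd i f t) := by
  funext t
  by_cases h : i ∈ t <;> simp [gPd, h]

lemma gPd_zero (i : Fin n) : gPd i (fun _ => (0 : C)) = fun (_ : Finset (Fin n)) => (0 : C) := by
  funext t
  by_cases h : i ∈ t <;> simp [gPd, h]

end Dev
-- CHUNK2
section Dev2
variable {n : ℕ} {C : Type} [Field C]

lemma gHomog_congr {p q : ℕ} {f : Grass n C} (h : p % 2 = q % 2) (hf : gHomog p f) :
    gHomog q f := fun s hs => (hf s hs).trans h

lemma gHomog_delta (a : Finset (Fin n)) : gHomog a.card (gDelta C a) := by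
  intro s hs
  unfold gDelta at hs
  by_cases h : s = a
  · rw [h]
  · simp [h] at hs

lemma gHomog_mul {p q : ℕ} {f g : Grass n C} (hf : gHomog p f) (hg : gHomog q g) :
    gHomog (p + q) (gMul f g) := by
  intro s hs
  obtain ⟨a, ha, hne⟩ := Finset.exists_ne_zero_of_sum_ne_zero hs
  have h1 : f a ≠ 0 := fun e => hne (by simp [e])
  have h2 : g (s \ a) ≠ 0 := fun e => hne (by simp [e])
  have hsub := Finset.mem_powerset.mp ha
  have e1 := hf a h1
  have e2 := hg _ h2
  have hcard := Finset.card_sdiff_add_card_eq_card hsub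
  omega

lemma gHomog_pd {p : ℕ} {f : Grass n C} (i : Fin n) (hf : gHomog p f) :
    gHomog (p + 1) (gPd i f) := by
  intro s hs
  unfold gPd at hs
  split at hs
  · exact absurd rfl hs
  · next h =>
    have h1 : f (insert i s) ≠ 0 := fun e => hs (by simp [e])
    have := hf _ h1
    rw [Finset.card_insert_of_notMem h] at this
    omega

lemma etaFree_homog {ℓ : ℕ} {p : ℕ} {f : Grass (ℓ + 1) C} (hf : gHomog p f) :
    gHomog p (etaFree f) := by
  intro s hs
  unfold etaFree at hs
  split at hs
  · exact absurd rfl hs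
  · exact hf s hs

lemma etaPart_homog {ℓ : ℕ} {p : ℕ} {f : Grass (ℓ + 1) C} (hf : gHomog p f) :
    gHomog (p + 1) (etaPart f) := by
  intro s hs
  unfold etaPart at hs
  split at hs
  · exact absurd rfl hs
  · next h =>
    have h1 : f (insert 0 s) ≠ 0 := fun e => hs (by simp [e])
    have := hf _ h1
    rw [Finset.card_insert_of_notMem h] at this
    omega

lemma gBr_homog {p q : ℕ} {f g : Grass n C} {S : Matrix (Fin n) (Fin n) C}
    (hf : gHomog p f) (hg : gHomog q g) : gHomog (p + q) (gBr S p f g) := by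
  intro s hs
  unfold gBr at hs
  have h1 : (∑ i, ∑ j, S i j * gMul (gPd i f) (gPd j g) s) ≠ 0 := fun e => hs (by rw [e, mul_zero])
  obtain ⟨i, _, h2⟩ := Finset.exists_ne_zero_of_sum_ne_zero h1
  obtain ⟨j, _, h3⟩ := Finset.exists_ne_zero_of_sum_ne_zero h2
  have h4 : gMul (gPd i f) (gPd j g) s ≠ 0 := fun e => h3 (by rw [e, mul_zero])
  have := gHomog_mul (gHomog_pd i hf) (gHomog_pd j hg) s h4
  omega

lemma gMul_comm {p q : ℕ} {f g : Grass n C} (hf : gHomog p f) (hg : gHomog q g) :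
    gMul f g = fun t => (-1 : C) ^ (p * q) * gMul g f t := by
  funext t
  unfold gMul
  rw [Finset.mul_sum]
  refine Finset.sum_nbij' (fun a => t \ a) (fun a => t \ a) ?_ ?_ ?_ ?_ ?_
  · intro a ha
    exact Finset.mem_powerset.mpr Finset.sdiff_subset
  · intro a ha
    exact Finset.mem_powerset.mpr Finset.sdiff_subset
  · intro a ha
    exact Finset.sdiff_sdiff_eq_self (Finset.mem_powerset.mp ha)
  · intro a ha
    exact Finset.sdiff_sdiff_eq_self (Finset.mem_powerset.mp ha)
  · intro a ha
    rw [Finset.sdiff_sdiff_eq_self (Finset.mem_powerset.mp ha)]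
    by_cases h1 : f a = 0
    · simp [h1]
    by_cases h2 : g (t \ a) = 0
    · simp [h2]
    have e1 := hf a h1
    have e2 := hg _ h2
    rw [gSign_comm Finset.disjoint_sdiff]
    have : (-1 : C) ^ (a.card * (t \ a).card) = (-1 : C) ^ (p * q) := by
      apply negpow_parity
      rw [Nat.mul_mod, e1, e2, ← Nat.mul_mod]
    rw [this]
    ring

lemma gPd_gPd (i j : Fin n) (f : Grass n C) :
    gPd i (gPd j f) = fun t => -(gPd j (gPd i f) t) := by
  funext t
  unfold gPd
  by_cases hit : i ∈ t
  · simp [hit, Finset.mem_insert]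
  · by_cases hjt : j ∈ t
    · simp [hit, hjt, Finset.mem_insert]
    · by_cases hij : i = j
      · subst hij
        simp [hit, Finset.mem_insert]
      · have hii : i ∉ insert j t := by simp [Finset.mem_insert, hij, hit]
        have hjj : j ∉ insert i t := by
          simp only [Finset.mem_insert, not_or]
          exact ⟨fun e => hij e.symm, hjt⟩
        simp only [if_neg hit, if_neg hjt, if_neg hii, if_neg hjj]
        rw [Finset.insert_comm]
        have e1 : ((insert i t).filter (· < j)).card
            = (t.filter (· < j)).card + if i < j then 1 else 0 := by
          rw [Finset.filter_insert]
          split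
          · rw [Finset.card_insert_of_notMem (fun hm => hit (Finset.mem_filter.mp hm).1)]
          · simp
        have e2 : ((insert j t).filter (· < i)).card
            = (t.filter (· < i)).card + if j < i then 1 else 0 := by
          rw [Finset.filter_insert]
          split
          · rw [Finset.card_insert_of_notMem (fun hm => hjt (Finset.mem_filter.mp hm).1)]
          · simp
        rw [e1, e2]
        rcases lt_or_gt_of_ne (fun e => hij e) with h | h
        · rw [if_pos h, if_neg (not_lt.mpr h.le)]
          simp only [pow_add, pow_zero, pow_one, add_zero]
          ring
        · rw [if_neg (not_lt.mpr h.le), if_pos h]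
          simp only [pow_add, pow_zero, pow_one, add_zero]
          ring

lemma gSign_assoc_aux {a c t : Finset (Fin n)} (hac : a ⊆ c) (hct : c ⊆ t) :
    gSign C c (t \ c) * gSign C a (c \ a) = gSign C a (t \ a) * gSign C (c \ a) (t \ c) := by
  have h2 : t \ a = (c \ a) ∪ (t \ c) := by
    ext x
    simp only [Finset.mem_sdiff, Finset.mem_union]
    constructor
    · rintro ⟨hxt, hxa⟩
      by_cases hxc : x ∈ c
      · exact Or.inl ⟨hxc, hxa⟩
      · exact Or.inr ⟨hxt, hxc⟩
    · rintro (⟨hxc, hxa⟩ | ⟨hxt, hxc⟩)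
      · exact ⟨hct hxc, hxa⟩
      · exact ⟨hxt, fun hxa => hxc (hac hxa)⟩
  have hd : Disjoint (c \ a) (t \ c) := by
    rw [Finset.disjoint_left]
    intro x hx1 hx2
    exact (Finset.mem_sdiff.mp hx2).2 (Finset.mem_sdiff.mp hx1).1
  have hab : Disjoint a (c \ a) := Finset.disjoint_sdiff
  have key : gSign C (a ∪ (c \ a)) (t \ c) * gSign C a (c \ a)
      = gSign C a ((c \ a) ∪ (t \ c)) * gSign C (c \ a) (t \ c) := by
    rw [gSign_union_left hab, gSign_union_right hd]
    ring
  rw [Finset.union_sdiff_of_subset hac, ← h2] at key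
  exact key

lemma gMul_assoc_delta (a : Finset (Fin n)) (g h : Grass n C) :
    gMul (gMul (gDelta C a) g) h = gMul (gDelta C a) (gMul g h) := by
  funext t
  rw [gMul_delta_l, gMul_delta_l]
  show (gMul (fun u => if a ⊆ u then gSign C a (u \ a) * g (u \ a) else 0) h) t
      = if a ⊆ t then gSign C a (t \ a) * gMul g h (t \ a) else 0
  unfold gMul
  by_cases hat : a ⊆ t
  · rw [if_pos hat, Finset.mul_sum]
    have step : ∀ c ∈ t.powerset,
        gSign C c (t \ c) * (if a ⊆ c then gSign C a (c \ a) * g (c \ a) else 0) * h (t \ c)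
        = if a ⊆ c then gSign C c (t \ c) * (gSign C a (c \ a) * g (c \ a)) * h (t \ c) else 0 := by
      intro c _
      split <;> simp
    rw [Finset.sum_congr rfl step, ← Finset.sum_filter]
    refine Finset.sum_nbij' (fun c => c \ a) (fun d => a ∪ d) ?_ ?_ ?_ ?_ ?_
    · intro c hc
      rw [Finset.mem_filter, Finset.mem_powerset] at hc
      exact Finset.mem_powerset.mpr (Finset.sdiff_subset_sdiff hc.1 (le_refl a))
    · intro d hd
      rw [Finset.mem_powerset] at hd
      rw [Finset.mem_filter, Finset.mem_powerset]
      refine ⟨Finset.union_subset hat (hd.trans Finset.sdiff_subset), Finset.subset_union_left⟩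
    · intro c hc
      rw [Finset.mem_filter] at hc
      exact Finset.union_sdiff_of_subset hc.2
    · intro d hd
      rw [Finset.mem_powerset] at hd
      apply Finset.union_sdiff_cancel_left
      exact Finset.disjoint_sdiff.mono_right hd
    · intro c hc
      rw [Finset.mem_filter, Finset.mem_powerset] at hc
      obtain ⟨hct, hac⟩ := hc
      have hargs : (t \ a) \ (c \ a) = t \ c := by
        ext x
        simp only [Finset.mem_sdiff]
        constructor
        · rintro ⟨⟨hxt, hxa⟩, hx2⟩
          refine ⟨hxt, fun hxc => hx2 ⟨hxc, hxa⟩⟩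
        · rintro ⟨hxt, hxc⟩
          exact ⟨⟨hxt, fun hxa => hxc (hac hxa)⟩, fun hx => hxc hx.1⟩
      rw [hargs]
      have := gSign_assoc_aux (C := C) hac hct
      calc gSign C c (t \ c) * (gSign C a (c \ a) * g (c \ a)) * h (t \ c)
          = (gSign C c (t \ c) * gSign C a (c \ a)) * g (c \ a) * h (t \ c) := by ring
        _ = (gSign C a (t \ a) * gSign C (c \ a) (t \ c)) * g (c \ a) * h (t \ c) := by rw [this]
        _ = gSign C a (t \ a) * (gSign C (c \ a) (t \ c) * g (c \ a) * h (t \ c)) := by ring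
  · rw [if_neg hat]
    apply Finset.sum_eq_zero
    intro c hc
    have : ¬ a ⊆ c := fun h' => hat (h'.trans (Finset.mem_powerset.mp hc))
    simp [this]

lemma gMul_assoc (f g h : Grass n C) : gMul (gMul f g) h = gMul f (gMul g h) := by
  rw [gDelta_expand f]
  simp only [gMul_sum_l, gMul_smul_l, gMul_assoc_delta]

end Dev2
-- CHUNK3 : Leibniz rule
section Dev3
variable {n : ℕ} {C : Type} [Field C]

lemma subset_insert_iff_erase {i : Fin n} {a t : Finset (Fin n)} (hit : i ∉ t) :
    a ⊆ insert i t ↔ a.erase i ⊆ t := by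
  constructor
  · intro h x hx
    rcases Finset.mem_erase.mp hx with ⟨hxi, hxa⟩
    rcases Finset.mem_insert.mp (h hxa) with h' | h'
    · exact absurd h' hxi
    · exact h'
  · intro h x hx
    by_cases hxi : x = i
    · exact Finset.mem_insert.mpr (Or.inl hxi)
    · exact Finset.mem_insert.mpr (Or.inr (h (Finset.mem_erase.mpr ⟨hxi, hx⟩)))

lemma neg_one_sq_pow (k : ℕ) : (-1 : C) ^ k * (-1 : C) ^ k = 1 := by
  rw [← pow_add, ← two_mul, pow_mul, neg_one_sq, one_pow]

lemma gPd_mul_delta (i : Fin n) (a : Finset (Fin n)) (g : Grass n C) :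
    gPd i (gMul (gDelta C a) g) =
      fun t => gMul (gPd i (gDelta C a)) g t
        + (-1 : C) ^ a.card * gMul (gDelta C a) (gPd i g) t := by
  by_cases hia : i ∈ a
  · have hfn : gPd i (gDelta C a)
        = fun u => (-1 : C) ^ ((a.filter (· < i)).card) * gDelta C (a.erase i) u := by
      rw [gPd_delta]
      funext u
      by_cases hu : u = a.erase i <;> simp [gDelta, hia, hu]
    funext t
    simp only [hfn, gMul_smul_l, gMul_delta_l]
    unfold gPd
    beta_reduce
    have hfiltra : ((a.erase i).filter (· < i)) = a.filter (· < i) := by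
      rw [Finset.filter_erase, Finset.erase_eq_of_notMem (by simp)]
    have hfiltra2 : ((a.erase i).filter (i < ·)) = a.filter (i < ·) := by
      rw [Finset.filter_erase, Finset.erase_eq_of_notMem (by simp)]
    have hcnt : (a.filter (· < i)).card + (a.filter (i < ·)).card + 1 = a.card := by
      have h1 := filter_lt_card_add (Finset.notMem_erase i a)
      rw [hfiltra, hfiltra2, Finset.card_erase_of_mem hia] at h1
      have h2 : 1 ≤ a.card := Finset.card_pos.mpr ⟨i, hia⟩
      omega
    by_cases hit : i ∈ t
    · rw [if_pos hit]
      by_cases hat : a ⊆ t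
      · have ha't : a.erase i ⊆ t := (Finset.erase_subset i a).trans hat
        have hii : i ∉ t \ a := fun hm => (Finset.mem_sdiff.mp hm).2 hia
        have harg : t \ a.erase i = insert i (t \ a) := by
          ext x
          simp only [Finset.mem_sdiff, Finset.mem_erase, Finset.mem_insert]
          constructor
          · rintro ⟨hxt, hx⟩
            by_cases hxi : x = i
            · exact Or.inl hxi
            · exact Or.inr ⟨hxt, fun hxa => hx ⟨hxi, hxa⟩⟩
          · rintro (hxi | ⟨hxt, hxa⟩)
            · subst hxi; exact ⟨hit, fun hx => hx.1 rfl⟩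
            · exact ⟨hxt, fun hx => hxa hx.2⟩
        rw [if_pos ha't, if_pos hat, if_neg hii]
        have e1 := gSign_insert_right (C := C) hii (a.erase i)
        have e2 := gSign_insert_left (C := C) (Finset.notMem_erase i a) (t \ a)
        rw [Finset.insert_erase hia] at e2
        rw [harg, e1, e2, gSign_single_left, gSign_single_right, hfiltra2]
        have hz : (-1 : C) ^ a.card * (((-1:C) ^ ((t\a).filter (· < i)).card)
            * ((-1:C) ^ ((t\a).filter (· < i)).card))
            = -((-1:C) ^ ((a.filter (· < i)).card) * (-1:C) ^ ((a.filter (i < ·)).card)) := by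
          rw [neg_one_sq_pow, mul_one, ← hcnt, pow_add, pow_add, pow_one]
          ring
        linear_combination (-(gSign C (a.erase i) (t \ a) * g (insert i (t \ a)))) * hz
      · have hno : ¬ a.erase i ⊆ t := by
          intro h
          apply hat
          intro x hx
          by_cases hxi : x = i
          · subst hxi; exact hit
          · exact h (Finset.mem_erase.mpr ⟨hxi, hx⟩)
        rw [if_neg hno, if_neg hat]
        ring
    · rw [if_neg hit]
      have hnat : ¬ a ⊆ t := fun h => hit (h hia)
      rw [if_neg hnat]
      by_cases hae : a.erase i ⊆ t
      · have hsub : a ⊆ insert i t := (subset_insert_iff_erase hit).mpr hae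
        have harg1 : insert i t \ a = t \ a.erase i := by
          ext x
          simp only [Finset.mem_sdiff, Finset.mem_insert, Finset.mem_erase]
          constructor
          · rintro ⟨hxi | hxt, hxa⟩
            · subst hxi; exact absurd hia hxa
            · exact ⟨hxt, fun hx => hxa hx.2⟩
          · rintro ⟨hxt, hx⟩
            refine ⟨Or.inr hxt, fun hxa => hx ⟨?_, hxa⟩⟩
            intro hxi; subst hxi; exact hit hxt
        have harg2 : t \ a.erase i = t \ a := by
          ext x
          simp only [Finset.mem_sdiff, Finset.mem_erase]
          constructor
          · rintro ⟨hxt, hx⟩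
            exact ⟨hxt, fun hxa => hx ⟨fun hxi => hit (hxi ▸ hxt), hxa⟩⟩
          · rintro ⟨hxt, hxa⟩
            exact ⟨hxt, fun hx => hxa hx.2⟩
        rw [if_pos hsub, if_pos hae, harg1, harg2]
        have e2 := gSign_insert_left (C := C) (Finset.notMem_erase i a) (t \ a)
        rw [Finset.insert_erase hia] at e2
        have hft : (t.filter (· < i)).card
            = ((a.erase i).filter (· < i)).card + ((t \ a.erase i).filter (· < i)).card :=
          filter_card_sdiff hae i
        rw [hfiltra, harg2] at hft
        rw [e2, gSign_single_left, hft, pow_add]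
        have hsq := neg_one_sq_pow (C := C) (((t\a).filter (· < i)).card)
        linear_combination ((-1:C) ^ ((a.filter (· < i)).card) * gSign C (a.erase i) (t \ a) * g (t \ a)) * hsq
      · have hsub : ¬ a ⊆ insert i t := fun h => hae ((subset_insert_iff_erase hit).mp h)
        rw [if_neg hsub, if_neg hae]
        ring
  · have hz : gPd i (gDelta C a) = (fun _ => (0 : C)) := by
      rw [gPd_delta]
      funext u
      simp [hia]
    funext t
    simp only [hz, gMul_zero_l, gMul_delta_l]
    unfold gPd
    beta_reduce
    by_cases hit : i ∈ t
    · rw [if_pos hit]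
      by_cases hat : a ⊆ t
      · have hii : i ∈ t \ a := Finset.mem_sdiff.mpr ⟨hit, hia⟩
        rw [if_pos hat, if_pos hii]
        ring
      · rw [if_neg hat]; ring
    · rw [if_neg hit]
      by_cases hat : a ⊆ t
      · have hsub : a ⊆ insert i t := hat.trans (Finset.subset_insert i t)
        have hii : i ∉ t \ a := fun hm => hit (Finset.mem_sdiff.mp hm).1
        have harg : insert i t \ a = insert i (t \ a) := by
          ext x
          simp only [Finset.mem_sdiff, Finset.mem_insert]
          constructor
          · rintro ⟨hxi | hxt, hxa⟩
            · exact Or.inl hxi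
            · exact Or.inr ⟨hxt, hxa⟩
          · rintro (hxi | ⟨hxt, hxa⟩)
            · subst hxi; exact ⟨Or.inl rfl, hia⟩
            · exact ⟨Or.inr hxt, hxa⟩
        rw [if_pos hsub, if_pos hat, if_neg hii, harg]
        rw [gSign_insert_right (C := C) hii a, gSign_single_right]
        have hft : (t.filter (· < i)).card
            = (a.filter (· < i)).card + ((t \ a).filter (· < i)).card :=
          filter_card_sdiff hat i
        have hca : (a.filter (· < i)).card + (a.filter (i < ·)).card = a.card :=
          filter_lt_card_add hia
        rw [hft, ← hca]
        simp only [pow_add]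
        ring
      · have hsub : ¬ a ⊆ insert i t := by
          intro h
          apply hat
          intro x hx
          rcases Finset.mem_insert.mp (h hx) with h' | h'
          · subst h'; exact absurd hx hia
          · exact h'
        rw [if_neg hsub, if_neg hat]
        ring

lemma gPd_mul {p : ℕ} {f : Grass n C} (hf : gHomog p f) (i : Fin n) (g : Grass n C) :
    gPd i (gMul f g) = fun t => gMul (gPd i f) g t + (-1 : C) ^ p * gMul f (gPd i g) t := by
  funext t
  rw [gDelta_expand f]
  simp only [gMul_sum_l, gMul_smul_l, gPd_sum, gPd_smul, gPd_mul_delta]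
  rw [Finset.mul_sum, ← Finset.sum_add_distrib]
  refine Finset.sum_congr rfl fun s _ => ?_
  by_cases hs : f s = 0
  · simp [hs]
  · have := hf s hs
    have hpow : (-1 : C) ^ s.card = (-1 : C) ^ p := negpow_parity this
    rw [hpow]
    ring
end Dev3
-- CHUNK4
section Dev4
variable {n : ℕ} {ℓ : ℕ} {C : Type} [Field C]

lemma sum_sum_split {m : ℕ} (S : Matrix (Fin m) (Fin m) C) (e : C) (A B : Fin m → Fin m → C) :
    (∑ i, ∑ j, S i j * (A i j + e * B i j))
      = (∑ i, ∑ j, S i j * A i j) + e * ∑ i, ∑ j, S i j * B i j := by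
  rw [Finset.mul_sum, ← Finset.sum_add_distrib]
  refine Finset.sum_congr rfl fun i _ => ?_
  rw [Finset.mul_sum, ← Finset.sum_add_distrib]
  refine Finset.sum_congr rfl fun j _ => ?_
  ring

-- eta support lemmas
lemma etaSupp_etaFree (f : Grass (ℓ+1) C) : ∀ s, (0 : Fin (ℓ+1)) ∈ s → etaFree f s = 0 := by
  intro s h; simp [etaFree, h]

lemma etaSupp_etaPart (f : Grass (ℓ+1) C) : ∀ s, (0 : Fin (ℓ+1)) ∈ s → etaPart f s = 0 := by
  intro s h; simp [etaPart, h]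

lemma etaSupp_gPd {u : Grass (ℓ+1) C} (i : Fin (ℓ+1))
    (hu : ∀ s, (0 : Fin (ℓ+1)) ∈ s → u s = 0) :
    ∀ s, (0 : Fin (ℓ+1)) ∈ s → gPd i u s = 0 := by
  intro s h
  unfold gPd
  by_cases hi : i ∈ s
  · simp [hi]
  · simp [hi, hu _ (Finset.mem_insert_of_mem h)]

lemma etaSupp_gMul {u v : Grass (ℓ+1) C}
    (hu : ∀ s, (0 : Fin (ℓ+1)) ∈ s → u s = 0) (hv : ∀ s, (0 : Fin (ℓ+1)) ∈ s → v s = 0) :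
    ∀ t, (0 : Fin (ℓ+1)) ∈ t → gMul u v t = 0 := by
  intro t h
  apply Finset.sum_eq_zero
  intro a ha
  by_cases h0 : (0 : Fin (ℓ+1)) ∈ a
  · simp [hu _ h0]
  · have : (0 : Fin (ℓ+1)) ∈ t \ a := Finset.mem_sdiff.mpr ⟨h, h0⟩
    simp [hv _ this]

lemma etaSupp_gBr {u v : Grass (ℓ+1) C} {S : Matrix (Fin (ℓ+1)) (Fin (ℓ+1)) C} {p : ℕ}
    (hu : ∀ s, (0 : Fin (ℓ+1)) ∈ s → u s = 0) (hv : ∀ s, (0 : Fin (ℓ+1)) ∈ s → v s = 0) :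
    ∀ t, (0 : Fin (ℓ+1)) ∈ t → gBr S p u v t = 0 := by
  intro t h
  unfold gBr
  rw [Finset.sum_eq_zero, mul_zero]
  intro i _
  rw [Finset.sum_eq_zero]
  intro j _
  rw [etaSupp_gMul (etaSupp_gPd i hu) (etaSupp_gPd j hv) t h, mul_zero]

lemma gPd_zero_of_etaSupp {u : Grass (ℓ+1) C}
    (hu : ∀ s, (0 : Fin (ℓ+1)) ∈ s → u s = 0) :
    gPd (0 : Fin (ℓ+1)) u = fun _ => (0 : C) := by
  funext t
  unfold gPd
  by_cases h : (0 : Fin (ℓ+1)) ∈ t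
  · simp [h]
  · simp [h, hu _ (Finset.mem_insert_self 0 t)]

lemma etaFree_gPd {i : Fin (ℓ+1)} (hi : i ≠ 0) (h : Grass (ℓ+1) C) :
    etaFree (gPd i h) = gPd i (etaFree h) := by
  funext s
  unfold etaFree gPd
  by_cases h0 : (0 : Fin (ℓ+1)) ∈ s
  · have : (0 : Fin (ℓ+1)) ∈ insert i s := Finset.mem_insert_of_mem h0
    by_cases hi' : i ∈ s <;> simp [h0, hi', this]
  · have : (0 : Fin (ℓ+1)) ∉ insert i s := by
      simp only [Finset.mem_insert, not_or]
      exact ⟨fun e => hi e.symm, h0⟩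
    by_cases hi' : i ∈ s <;> simp [h0, hi', this]

lemma gPd_zero_eq {p : ℕ} {f : Grass (ℓ+1) C} (hf : gHomog p f) :
    gPd (0 : Fin (ℓ+1)) f = fun t => (-1 : C) ^ (p + 1) * etaPart f t := by
  funext t
  unfold gPd etaPart
  by_cases h : (0 : Fin (ℓ+1)) ∈ t
  · simp [h]
  · rw [if_neg h, if_neg h]
    have hfe : t.filter (· < (0 : Fin (ℓ+1))) = ∅ := by
      apply Finset.filter_eq_empty_iff.mpr
      intro x _
      exact not_lt.mpr (Fin.zero_le x)
    rw [hfe]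
    by_cases hz : f (insert 0 t) = 0
    · simp [hz]
    · have hc := hf _ hz
      rw [Finset.card_insert_of_notMem h] at hc
      have : (-1 : C) ^ (p + 1) * (-1 : C) ^ t.card = 1 := by
        rw [← pow_add]
        have : (p + 1 + t.card) % 2 = 0 % 2 := by omega
        rw [negpow_parity this, pow_zero]
      simp only [Finset.card_empty, pow_zero, one_mul, ← mul_assoc, this]

lemma eta_decomp (f : Grass (ℓ+1) C) (t : Finset (Fin (ℓ+1))) :
    f t = etaFree f t + gMul (etaPart f) (gDelta C {0}) t := by
  rw [gMul_delta_r]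
  beta_reduce
  unfold etaFree
  by_cases h : (0 : Fin (ℓ+1)) ∈ t
  · rw [if_pos h, if_pos (Finset.singleton_subset_iff.mpr h)]
    have he : t \ {0} = t.erase 0 := by
      ext x; simp [Finset.mem_sdiff, Finset.mem_erase, and_comm]
    have h0e : (0 : Fin (ℓ+1)) ∉ t.erase 0 := Finset.notMem_erase _ _
    rw [he]
    unfold etaPart
    rw [if_neg h0e, Finset.insert_erase h]
    rw [gSign_single_right]
    have hfe : (t.erase 0).filter ((0 : Fin (ℓ+1)) < ·) = t.erase 0 := by
      apply Finset.filter_eq_self.mpr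
      intro x hx
      exact Fin.pos_of_ne_zero (Finset.mem_erase.mp hx).1
    rw [hfe, zero_add, ← mul_assoc, neg_one_sq_pow, one_mul]
  · rw [if_neg h, if_neg (fun hs => h (Finset.singleton_subset_iff.mp hs))]
    ring

-- gBr and phiS linearity in second argument
lemma gBr_sum {ι : Type} {S : Matrix (Fin n) (Fin n) C} (p : ℕ) (f : Grass n C)
    (A : Finset ι) (F : ι → Grass n C) :
    gBr S p f (fun u => ∑ s ∈ A, F s u) = fun t => ∑ s ∈ A, gBr S p f (F s) t := by
  funext t
  unfold gBr
  simp only [gPd_sum, gMul_sum_r, Finset.mul_sum]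
  exact Eq.trans (Finset.sum_congr rfl fun i _ => Finset.sum_comm) Finset.sum_comm

lemma gBr_smul {S : Matrix (Fin n) (Fin n) C} (p : ℕ) (f : Grass n C) (c : C) (g : Grass n C) :
    gBr S p f (fun u => c * g u) = fun t => c * gBr S p f g t := by
  funext t
  unfold gBr
  simp only [gPd_smul, gMul_smul_r, Finset.mul_sum]
  exact Finset.sum_congr rfl fun i _ => Finset.sum_congr rfl fun j _ => by ring

lemma gBr_add {S : Matrix (Fin n) (Fin n) C} (p : ℕ) (f g g' : Grass n C) :
    gBr S p f (fun u => g u + g' u) = fun t => gBr S p f g t + gBr S p f g' t := by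
  funext t
  unfold gBr
  simp only [gPd_add, gMul_add_r, Finset.mul_sum]
  rw [← Finset.sum_add_distrib]
  refine Finset.sum_congr rfl fun i _ => ?_
  rw [← Finset.sum_add_distrib]
  refine Finset.sum_congr rfl fun j _ => ?_
  ring

lemma gBr_zero {S : Matrix (Fin n) (Fin n) C} (p : ℕ) (f : Grass n C) :
    gBr S p f (fun _ => (0 : C)) = fun _ => 0 := by
  funext t
  unfold gBr
  simp only [gPd_zero, gMul_zero_r]
  simp

lemma phiS_sum {ι : Type} (T : Matrix (Fin ℓ) (Fin ℓ) C) (p : ℕ) (f : Grass (ℓ+1) C)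
    (A : Finset ι) (F : ι → Grass (ℓ+1) C) :
    phiS T p f (fun u => ∑ s ∈ A, F s u) = fun t => ∑ s ∈ A, phiS T p f (F s) t := by
  unfold phiS
  funext t
  simp only [gBr_sum, gPd_sum, gMul_sum_r]
  rw [← Finset.sum_add_distrib]

lemma phiS_smul (T : Matrix (Fin ℓ) (Fin ℓ) C) (p : ℕ) (f : Grass (ℓ+1) C)
    (c : C) (x : Grass (ℓ+1) C) :
    phiS T p f (fun u => c * x u) = fun t => c * phiS T p f x t := by
  unfold phiS
  funext t
  simp only [gBr_smul, gPd_smul, gMul_smul_r]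
  ring

lemma phiS_add (T : Matrix (Fin ℓ) (Fin ℓ) C) (p : ℕ) (f : Grass (ℓ+1) C)
    (x y : Grass (ℓ+1) C) :
    phiS T p f (fun u => x u + y u) = fun t => phiS T p f x t + phiS T p f y t := by
  unfold phiS
  funext t
  simp only [gBr_add, gPd_add, gMul_add_r]
  ring

lemma phiS_zero (T : Matrix (Fin ℓ) (Fin ℓ) C) (p : ℕ) (f : Grass (ℓ+1) C) :
    phiS T p f (fun _ => (0 : C)) = fun _ => 0 := by
  unfold phiS
  funext t
  simp only [gBr_zero, gPd_zero, gMul_zero_r]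
  simp

lemma phiS_homog {T : Matrix (Fin ℓ) (Fin ℓ) C} {p a : ℕ} {f x : Grass (ℓ+1) C}
    (hf : gHomog p f) (hx : gHomog a x) : gHomog (p + a) (phiS T p f x) := by
  intro s hs
  unfold phiS at hs
  by_cases h1 : gBr (etaExtend T) p (etaFree f) x s = 0
  · have h2 : gMul (etaPart f) (gPd 0 x) s ≠ 0 := fun e => hs (by rw [h1, e, add_zero])
    have := gHomog_mul (etaPart_homog hf) (gHomog_pd 0 hx) s h2
    omega
  · have := gBr_homog (etaFree_homog hf) hx s h1
    omega

-- PART (i)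
lemma partI (T : Matrix (Fin ℓ) (Fin ℓ) C) (p a : ℕ) (f x y : Grass (ℓ + 1) C)
    (hf : gHomog p f) (hx : gHomog a x) :
    ∀ t, phiS T p f (gMul x y) t =
      gMul (phiS T p f x) y t + (-1 : C) ^ (p * a) * gMul x (phiS T p f y) t := by
  intro t
  have hF : ∀ i : Fin (ℓ+1), gHomog (p+1) (gPd i (etaFree f)) :=
    fun i => gHomog_pd i (etaFree_homog hf)
  have hP : gHomog (p+1) (etaPart f) := etaPart_homog hf
  have hLeib : ∀ j : Fin (ℓ+1), gPd j (gMul x y)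
      = fun u => gMul (gPd j x) y u + (-1:C)^a * gMul x (gPd j y) u :=
    fun j => gPd_mul hx j y
  have hcomm : ∀ i : Fin (ℓ+1), gMul (gPd i (etaFree f)) x
      = fun u => (-1:C)^((p+1)*a) * gMul x (gPd i (etaFree f)) u :=
    fun i => gMul_comm (hF i) hx
  have hcommP : gMul (etaPart f) x
      = fun u => (-1:C)^((p+1)*a) * gMul x (etaPart f) u := gMul_comm hP hx
  have hsgn : ∀ z : C, (-1:C)^a * ((-1:C)^((p+1)*a) * z) = (-1:C)^(p*a) * z := by
    intro z
    rw [← mul_assoc, ← pow_add, show a + (p+1)*a = p*a + 2*a by ring, negpow_two_mul]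
  unfold phiS gBr
  beta_reduce
  simp only [hLeib, gMul_add_r, gMul_smul_r, gMul_add_l, gMul_smul_l, gMul_sum_l, gMul_sum_r]
  simp only [← gMul_assoc]
  simp only [hcomm, hcommP, gMul_smul_l]
  simp only [gMul_assoc]
  simp only [hsgn]
  rw [sum_sum_split]
  ring

end Dev4
-- CHUNK5
section Dev5
variable {n : ℕ} {ℓ : ℕ} {C : Type} [Field C]

lemma etaExtend_zero_left (T : Matrix (Fin ℓ) (Fin ℓ) C) (j : Fin (ℓ+1)) :
    etaExtend T 0 j = 0 := by simp [etaExtend]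

lemma etaExtend_zero_right (T : Matrix (Fin ℓ) (Fin ℓ) C) (i : Fin (ℓ+1)) :
    etaExtend T i 0 = 0 := by
  unfold etaExtend
  split <;> simp

lemma etaExtend_symm {T : Matrix (Fin ℓ) (Fin ℓ) C} (hT : Tᵀ = T) :
    ∀ i j, etaExtend T i j = etaExtend T j i := by
  intro i j
  unfold etaExtend
  by_cases hi : i = 0 <;> by_cases hj : j = 0 <;> simp [hi, hj]
  calc T (i.pred hi) (j.pred hj) = Tᵀ (j.pred hj) (i.pred hi) := (Matrix.transpose_apply T _ _).symm
    _ = T (j.pred hj) (i.pred hi) := by rw [hT]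

lemma gMul_neg_l (f g : Grass n C) :
    gMul (fun u => -(f u)) g = fun t => -(gMul f g t) := by
  funext t
  unfold gMul
  rw [← Finset.sum_neg_distrib]
  exact Finset.sum_congr rfl fun a _ => by ring

lemma sum_sum_ext {m : ℕ} (S : Matrix (Fin m) (Fin m) C) (c : C) (X : Fin m → Fin m → C) :
    (∑ a, ∑ b, S a b * (c * X a b)) = c * ∑ a, ∑ b, S a b * X a b := by
  simp only [Finset.mul_sum]
  exact Finset.sum_congr rfl fun a _ => Finset.sum_congr rfl fun b _ => by ring

lemma sum_sum_neg {m : ℕ} (S : Matrix (Fin m) (Fin m) C) (X : Fin m → Fin m → C) :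
    (∑ a, ∑ b, S a b * -(X a b)) = -(∑ a, ∑ b, S a b * X a b) := by
  simp only [mul_neg, Finset.sum_neg_distrib]

lemma sum_sum_swap {m : ℕ} {S : Matrix (Fin m) (Fin m) C} (hS : ∀ i j, S i j = S j i)
    (X : Fin m → Fin m → C) :
    (∑ a, ∑ b, S a b * X b a) = ∑ a, ∑ b, S a b * X a b := by
  rw [Finset.sum_comm]
  exact Finset.sum_congr rfl fun b _ => Finset.sum_congr rfl fun a _ => by rw [hS]

-- expansion of the bracket's derivative
lemma key1 {S : Matrix (Fin n) (Fin n) C} (hS : ∀ i j, S i j = S j i) {p q : ℕ}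
    {F G : Grass n C} (hF : gHomog p F) (hG : gHomog q G) (i : Fin n)
    (t : Finset (Fin n)) :
    (-1:C)^(p+q+1) * gPd i (gBr S p F G) t
      = (-1:C)^(q+1) * gBr S p F (gPd i G) t
        - (-1:C)^(p*q) * ((-1:C)^(p+1) * gBr S q G (gPd i F) t) := by
  have hLeib' : ∀ a b : Fin n, gPd i (gMul (gPd a F) (gPd b G))
      = fun u => gMul (gPd i (gPd a F)) (gPd b G) u
        + (-1:C)^(p+1) * gMul (gPd a F) (gPd i (gPd b G)) u :=
    fun a b => gPd_mul (gHomog_pd a hF) i _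
  have hgg1 : ∀ b : Fin n, gPd b (gPd i G) = fun u => -(gPd i (gPd b G) u) :=
    fun b => gPd_gPd b i G
  have hgg2 : ∀ b : Fin n, gPd b (gPd i F) = fun u => -(gPd i (gPd b F) u) :=
    fun b => gPd_gPd b i F
  have hcm : ∀ a b : Fin n, gMul (gPd a G) (gPd i (gPd b F))
      = fun u => (-1:C)^((q+1)*(p+2)) * gMul (gPd i (gPd b F)) (gPd a G) u :=
    fun a b => gMul_comm (gHomog_pd a hG) (gHomog_pd i (gHomog_pd b hF))
  set U := ∑ a, ∑ b, S a b * gMul (gPd i (gPd a F)) (gPd b G) t with hU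
  set V := ∑ a, ∑ b, S a b * gMul (gPd a F) (gPd i (gPd b G)) t with hV
  have hA : gPd i (gBr S p F G) t = (-1:C)^(p+1) * U + V := by
    unfold gBr
    simp only [gPd_smul, gPd_sum, hLeib']
    rw [sum_sum_split]
    rw [hU, hV]
    have hsq := neg_one_sq_pow (C := C) (p+1)
    linear_combination V * hsq
  have hB : gBr S p F (gPd i G) t = -((-1:C)^(p+1) * V) := by
    unfold gBr
    simp only [hgg1, gMul_neg_r]
    rw [sum_sum_neg, hV]
    ring
  have hCc : gBr S q G (gPd i F) t
      = -((-1:C)^(q+1) * ((-1:C)^((q+1)*(p+2)) * U)) := by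
    unfold gBr
    simp only [hgg2, gMul_neg_r, hcm]
    have : (∑ a, ∑ b, S a b * -((-1:C)^((q+1)*(p+2)) * gMul (gPd i (gPd b F)) (gPd a G) t))
        = -((-1:C)^((q+1)*(p+2)) * U) := by
      rw [sum_sum_neg, sum_sum_ext, sum_sum_swap hS, hU]
    rw [this]
    ring
  rw [hA, hB, hCc]
  have e5 : (-1:C)^((q+1)*(p+2)) = (-1:C)^(p*q) * (-1:C)^p := by
    rw [show (q+1)*(p+2) = (p*q + p) + 2*(q+1) from by ring, negpow_two_mul, pow_add]
  rw [e5]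
  have hpq := neg_one_sq_pow (C := C) (p*q)
  have hp := neg_one_sq_pow (C := C) p
  have hq := neg_one_sq_pow (C := C) q
  simp only [pow_add, pow_one]
  linear_combination (-((-1:C)^p * (-1:C)^p * (-1:C)^q * U)) * hpq
end Dev5
-- CHUNK6
section Dev6
variable {n : ℕ} {ℓ : ℕ} {C : Type} [Field C]

lemma gMul_pt_etaFree {u v : Grass (ℓ+1) C} {t : Finset (Fin (ℓ+1))}
    (h : (0 : Fin (ℓ+1)) ∉ t) : gMul u v t = gMul (etaFree u) (etaFree v) t := by
  refine Finset.sum_congr rfl fun a ha => ?_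
  have h1 : (0 : Fin (ℓ+1)) ∉ a := fun hm => h (Finset.mem_powerset.mp ha hm)
  have h2 : (0 : Fin (ℓ+1)) ∉ t \ a := fun hm => h (Finset.mem_sdiff.mp hm).1
  rw [etaFree, etaFree, if_neg h1, if_neg h2]

lemma etaFree_gBr {T : Matrix (Fin ℓ) (Fin ℓ) C} {p : ℕ} (f g : Grass (ℓ+1) C) :
    etaFree (gBr (etaExtend T) p f g)
      = gBr (etaExtend T) p (etaFree f) (etaFree g) := by
  funext t
  by_cases h : (0 : Fin (ℓ+1)) ∈ t
  · rw [show etaFree (gBr (etaExtend T) p f g) t = 0 from by simp [etaFree, h], eq_comm]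
    exact etaSupp_gBr (etaSupp_etaFree f) (etaSupp_etaFree g) t h
  · rw [show etaFree (gBr (etaExtend T) p f g) t = gBr (etaExtend T) p f g t from
      by simp [etaFree, h]]
    unfold gBr
    congr 1
    refine Finset.sum_congr rfl fun i _ => Finset.sum_congr rfl fun j _ => ?_
    by_cases hi : i = 0
    · simp [hi, etaExtend_zero_left]
    by_cases hj : j = 0
    · simp [hj, etaExtend_zero_right]
    rw [gMul_pt_etaFree h, etaFree_gPd hi, etaFree_gPd hj]

lemma phiS_gen (T : Matrix (Fin ℓ) (Fin ℓ) C) (p : ℕ) (f : Grass (ℓ+1) C) (k : Fin (ℓ+1)) :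
    phiS T p f (gDelta C {k}) = fun t =>
      (-1:C)^(p+1) * ∑ i, etaExtend T i k * gPd i (etaFree f) t
        + (if k = 0 then etaPart f t else 0) := by
  have hpd : ∀ j : Fin (ℓ+1), gPd j (gDelta C ({k} : Finset (Fin (ℓ+1))))
      = fun u => (if j = k then (1:C) else 0) * gDelta C ∅ u := by
    intro j
    rw [gPd_delta]
    funext u
    by_cases hj : j = k
    · subst hj
      by_cases hu : u = ∅ <;>
        simp [gDelta, hu, Finset.erase_singleton, Finset.filter_singleton]
    · simp [gDelta, hj]
  unfold phiS gBr
  funext t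
  simp only [hpd, gMul_smul_r, gMul_one_r]
  have hcol : ∀ i : Fin (ℓ+1),
      (∑ j, etaExtend T i j * ((if j = k then (1:C) else 0) * gPd i (etaFree f) t))
        = etaExtend T i k * gPd i (etaFree f) t := by
    intro i
    rw [Finset.sum_eq_single_of_mem k (Finset.mem_univ k)]
    · simp
    · intro j _ hj
      simp [hj]
  rw [Finset.sum_congr rfl (fun i _ => hcol i)]
  congr 1
  by_cases hk : k = 0
  · subst hk; simp
  · have : ¬ ((0 : Fin (ℓ+1)) = k) := fun e => hk e.symm
    simp [hk, this]

lemma etaPart_gBr {T : Matrix (Fin ℓ) (Fin ℓ) C} (hT : Tᵀ = T) {p q : ℕ}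
    {f g : Grass (ℓ+1) C} (hf : gHomog p f) (hg : gHomog q g) (t : Finset (Fin (ℓ+1))) :
    etaPart (gBr (etaExtend T) p f g) t
      = gBr (etaExtend T) p (etaFree f) (etaPart g) t
        - (-1:C)^(p*q) * gBr (etaExtend T) q (etaFree g) (etaPart f) t := by
  have hbr := gBr_homog (S := etaExtend T) hf hg
  have h0 : etaPart (gBr (etaExtend T) p f g) t
      = (-1:C)^(p+q+1) * gPd 0 (gBr (etaExtend T) p f g) t := by
    rw [gPd_zero_eq hbr, ← mul_assoc, neg_one_sq_pow, one_mul]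
  rw [h0]
  have h1 : ∀ a : Fin (ℓ+1), gPd 0 (gPd a f)
      = fun u => -((-1:C)^(p+1) * gPd a (etaPart f) u) := by
    intro a
    funext u
    simp only [gPd_gPd 0 a f, gPd_zero_eq hf, gPd_smul]
  have h2 : ∀ b : Fin (ℓ+1), gPd 0 (gPd b g)
      = fun u => -((-1:C)^(q+1) * gPd b (etaPart g) u) := by
    intro b
    funext u
    simp only [gPd_gPd 0 b g, gPd_zero_eq hg, gPd_smul]
  have hL : ∀ a b : Fin (ℓ+1), gPd 0 (gMul (gPd a f) (gPd b g))
      = fun u => gMul (gPd 0 (gPd a f)) (gPd b g) u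
        + (-1:C)^(p+1) * gMul (gPd a f) (gPd 0 (gPd b g)) u :=
    fun a b => gPd_mul (gHomog_pd a hf) 0 _
  unfold gBr
  simp only [gPd_smul, gPd_sum, hL, h1, h2, gMul_neg_l, gMul_smul_l, gMul_neg_r, gMul_smul_r]
  have hcm2 : ∀ a b : Fin (ℓ+1), gMul (gPd a (etaFree g)) (gPd b (etaPart f))
      = fun u => (-1:C)^((q+1)*(p+2)) * gMul (gPd b (etaPart f)) (gPd a (etaFree g)) u :=
    fun a b => gMul_comm (gHomog_pd a (etaFree_homog hg)) (gHomog_pd b (etaPart_homog hf))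
  have hswap : (∑ a, ∑ b, (etaExtend T) a b * gMul (gPd a (etaFree g)) (gPd b (etaPart f)) t)
      = (-1:C)^((q+1)*(p+2))
        * ∑ a, ∑ b, (etaExtend T) a b * gMul (gPd a (etaPart f)) (gPd b (etaFree g)) t := by
    simp only [hcm2]
    rw [sum_sum_ext]
    congr 1
    exact sum_sum_swap (etaExtend_symm hT)
      (fun a b => gMul (gPd a (etaPart f)) (gPd b (etaFree g)) t)
  rw [hswap]
  have hη : gHomog 1 (gDelta C ({0} : Finset (Fin (ℓ+1)))) := by
    have := gHomog_delta (C := C) ({0} : Finset (Fin (ℓ+1)))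
    rwa [Finset.card_singleton] at this
  simp only [Finset.mul_sum]
  rw [← Finset.sum_sub_distrib]
  refine Finset.sum_congr rfl fun a _ => ?_
  rw [← Finset.sum_sub_distrib]
  refine Finset.sum_congr rfl fun b _ => ?_
  by_cases ha : a = 0
  · simp [ha, etaExtend_zero_left]
  by_cases hb : b = 0
  · simp [hb, etaExtend_zero_right]
  have hηza : gPd a (gDelta C ({0} : Finset (Fin (ℓ+1)))) = fun _ => (0:C) := by
    rw [gPd_delta]; funext u; simp [ha]
  have hηzb : gPd b (gDelta C ({0} : Finset (Fin (ℓ+1)))) = fun _ => (0:C) := by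
    rw [gPd_delta]; funext u; simp [hb]
  have hdecf : f = fun u => etaFree f u + gMul (etaPart f) (gDelta C {0}) u :=
    funext fun u => eta_decomp f u
  have hdecg : g = fun u => etaFree g u + gMul (etaPart g) (gDelta C {0}) u :=
    funext fun u => eta_decomp g u
  have hgb : gPd b g = fun u => gPd b (etaFree g) u
      + gMul (gPd b (etaPart g)) (gDelta C {0}) u := by
    funext u
    conv_lhs => rw [hdecg]
    simp only [gPd_add, gPd_mul (etaPart_homog hg) b (gDelta C {0}), hηzb, gMul_zero_r,
      mul_zero, add_zero]
  have hfa : gPd a f = fun u => gPd a (etaFree f) u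
      + gMul (gPd a (etaPart f)) (gDelta C {0}) u := by
    funext u
    conv_lhs => rw [hdecf]
    simp only [gPd_add, gPd_mul (etaPart_homog hf) a (gDelta C {0}), hηza, gMul_zero_r,
      mul_zero, add_zero]
  have hcη : gMul (gDelta C ({0} : Finset (Fin (ℓ+1)))) (gPd b (etaPart g))
      = fun u => (-1:C)^(1*(q+2)) * gMul (gPd b (etaPart g)) (gDelta C {0}) u :=
    gMul_comm hη (gHomog_pd b (etaPart_homog hg))
  rw [hgb, hfa]
  simp only [gMul_add_r, gMul_add_l, gMul_assoc, hcη, gMul_smul_r]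
  rcases Nat.even_or_odd p with hp | hp <;> rcases Nat.even_or_odd q with hq | hq
  · rw [Nat.even_iff] at hp hq
    rw [negpow_parity (m := p+q+1) (k := 1) (by omega),
      negpow_parity (m := p+1) (k := 1) (by omega),
      negpow_parity (m := q+1) (k := 1) (by omega),
      negpow_parity (m := p*q) (k := 0) (by simp [Nat.mul_mod, Nat.add_mod, hp, hq]),
      negpow_parity (m := 1*(q+2)) (k := 0) (by omega),
      negpow_parity (m := (q+1)*(p+2)) (k := 0) (by simp [Nat.mul_mod, Nat.add_mod, hp, hq])]
    ring
  · rw [Nat.even_iff] at hp; rw [Nat.odd_iff] at hq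
    rw [negpow_parity (m := p+q+1) (k := 0) (by omega),
      negpow_parity (m := p+1) (k := 1) (by omega),
      negpow_parity (m := q+1) (k := 0) (by omega),
      negpow_parity (m := p*q) (k := 0) (by simp [Nat.mul_mod, Nat.add_mod, hp, hq]),
      negpow_parity (m := 1*(q+2)) (k := 1) (by omega),
      negpow_parity (m := (q+1)*(p+2)) (k := 0) (by simp [Nat.mul_mod, Nat.add_mod, hp, hq])]
    ring
  · rw [Nat.odd_iff] at hp; rw [Nat.even_iff] at hq
    rw [negpow_parity (m := p+q+1) (k := 0) (by omega),
      negpow_parity (m := p+1) (k := 0) (by omega),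
      negpow_parity (m := q+1) (k := 1) (by omega),
      negpow_parity (m := p*q) (k := 0) (by simp [Nat.mul_mod, Nat.add_mod, hp, hq]),
      negpow_parity (m := 1*(q+2)) (k := 0) (by omega),
      negpow_parity (m := (q+1)*(p+2)) (k := 1) (by simp [Nat.mul_mod, Nat.add_mod, hp, hq])]
    ring
  · rw [Nat.odd_iff] at hp hq
    rw [negpow_parity (m := p+q+1) (k := 1) (by omega),
      negpow_parity (m := p+1) (k := 0) (by omega),
      negpow_parity (m := q+1) (k := 0) (by omega),
      negpow_parity (m := p*q) (k := 1) (by simp [Nat.mul_mod, Nat.add_mod, hp, hq]),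
      negpow_parity (m := 1*(q+2)) (k := 1) (by omega),
      negpow_parity (m := (q+1)*(p+2)) (k := 0) (by simp [Nat.mul_mod, Nat.add_mod, hp, hq])]
    ring
end Dev6
-- CHUNK7
section Dev7
variable {m : ℕ} {ℓ : ℕ} {C : Type} [Field C]

lemma gMul_sub_l (f f' g : Grass m C) :
    gMul (fun u => f u - f' u) g = fun t => gMul f g t - gMul f' g t := by
  funext t
  unfold gMul
  rw [← Finset.sum_sub_distrib]
  exact Finset.sum_congr rfl fun a _ => by ring

lemma gDelta_factor {s : Finset (Fin m)} (hs : s.Nonempty) :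
    gMul (gDelta C {s.min' hs}) (gDelta C (s.erase (s.min' hs))) = gDelta C s := by
  funext t
  rw [gMul_delta_l]
  beta_reduce
  set k := s.min' hs with hk
  have hkm : k ∈ s := Finset.min'_mem s hs
  by_cases ht : t = s
  · rw [ht, if_pos (Finset.singleton_subset_iff.mpr hkm), ← Finset.erase_eq]
    have hfe : (s.erase k).filter (· < k) = ∅ := by
      apply Finset.filter_eq_empty_iff.mpr
      intro x hx
      exact not_lt.mpr (Finset.min'_le s x (Finset.mem_erase.mp hx).2)
    rw [gSign_single_left, hfe]
    simp [gDelta]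
  · rw [show gDelta C s t = 0 from by simp [gDelta, ht]]
    by_cases hsub : ({k} : Finset (Fin m)) ⊆ t
    · rw [if_pos hsub]
      have hkt : k ∈ t := Finset.singleton_subset_iff.mp hsub
      have hne : t \ {k} ≠ s.erase k := by
        intro he
        apply ht
        have h1 : t \ {k} = t.erase k := (Finset.erase_eq t k).symm
        rw [h1] at he
        calc t = insert k (t.erase k) := (Finset.insert_erase hkt).symm
          _ = insert k (s.erase k) := by rw [he]
          _ = s := Finset.insert_erase hkm
      simp [gDelta, hne]
    · rw [if_neg hsub]

lemma phiS_delta_empty (T : Matrix (Fin ℓ) (Fin ℓ) C) (r : ℕ) (h : Grass (ℓ+1) C) :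
    phiS T r h (gDelta C ∅) = fun _ => 0 := by
  have hz : ∀ j : Fin (ℓ+1), gPd j (gDelta C (∅ : Finset (Fin (ℓ+1)))) = fun _ => (0:C) := by
    intro j
    rw [gPd_delta]
    funext u
    simp
  unfold phiS gBr
  funext t
  simp only [hz, gMul_zero_r]
  simp

lemma deriv_ext (r : ℕ) (D₁ D₂ : Grass (ℓ+1) C → Grass (ℓ+1) C)
    (h1sum : ∀ (A : Finset (Finset (Fin (ℓ+1)))) (F : Finset (Fin (ℓ+1)) → Grass (ℓ+1) C),
      D₁ (fun u => ∑ s ∈ A, F s u) = fun t => ∑ s ∈ A, D₁ (F s) t)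
    (h2sum : ∀ (A : Finset (Finset (Fin (ℓ+1)))) (F : Finset (Fin (ℓ+1)) → Grass (ℓ+1) C),
      D₂ (fun u => ∑ s ∈ A, F s u) = fun t => ∑ s ∈ A, D₂ (F s) t)
    (h1smul : ∀ (c : C) (x : Grass (ℓ+1) C), D₁ (fun u => c * x u) = fun t => c * D₁ x t)
    (h2smul : ∀ (c : C) (x : Grass (ℓ+1) C), D₂ (fun u => c * x u) = fun t => c * D₂ x t)
    (h1der : ∀ (a : ℕ) (x y : Grass (ℓ+1) C), gHomog a x → ∀ t,
      D₁ (gMul x y) t = gMul (D₁ x) y t + (-1:C)^(r*a) * gMul x (D₁ y) t)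
    (h2der : ∀ (a : ℕ) (x y : Grass (ℓ+1) C), gHomog a x → ∀ t,
      D₂ (gMul x y) t = gMul (D₂ x) y t + (-1:C)^(r*a) * gMul x (D₂ y) t)
    (hgen : ∀ k : Fin (ℓ+1), D₁ (gDelta C {k}) = D₂ (gDelta C {k}))
    (hone : D₁ (gDelta C ∅) = D₂ (gDelta C ∅)) :
    ∀ x t, D₁ x t = D₂ x t := by
  have hdelta : ∀ s : Finset (Fin (ℓ+1)), D₁ (gDelta C s) = D₂ (gDelta C s) := by
    intro s
    induction s using Finset.strongInduction with
    | _ s ih =>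
      rcases Finset.eq_empty_or_nonempty s with rfl | hs
      · exact hone
      · have hhom : gHomog 1 (gDelta C ({s.min' hs} : Finset (Fin (ℓ+1)))) := by
          have := gHomog_delta (C := C) ({s.min' hs} : Finset (Fin (ℓ+1)))
          rwa [Finset.card_singleton] at this
        have hssub : s.erase (s.min' hs) ⊂ s := Finset.erase_ssubset (Finset.min'_mem s hs)
        funext t
        rw [← gDelta_factor hs, h1der 1 _ _ hhom t, h2der 1 _ _ hhom t,
          hgen (s.min' hs), ih _ hssub]
  intro x t
  have hx : x = fun u => ∑ s ∈ (Finset.univ : Finset (Fin (ℓ+1))).powerset,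
      x s * gDelta C s u := gDelta_expand x
  conv_lhs => rw [hx]
  conv_rhs => rw [hx]
  rw [h1sum, h2sum]
  simp only [h1smul, h2smul]
  exact Finset.sum_congr rfl fun s _ => by rw [hdelta s]

lemma gen_agree {T : Matrix (Fin ℓ) (Fin ℓ) C} (hT : Tᵀ = T) {p q : ℕ}
    {f g : Grass (ℓ+1) C} (hf : gHomog p f) (hg : gHomog q g) (k : Fin (ℓ+1)) :
    phiS T (p+q) (gBr (etaExtend T) p f g) (gDelta C {k})
      = fun t => phiS T p f (phiS T q g (gDelta C {k})) t
          - (-1:C)^(p*q) * phiS T q g (phiS T p f (gDelta C {k})) t := by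
  funext t
  simp only [phiS_gen]
  by_cases hk : k = 0
  · subst hk
    simp only [etaExtend_zero_right, zero_mul, Finset.sum_const_zero, mul_zero, zero_add,
      eq_self_iff_true, if_true]
    have h1 : ∀ (r : ℕ) (h h' : Grass (ℓ+1) C), phiS T r h (etaPart h') t
        = gBr (etaExtend T) r (etaFree h) (etaPart h') t := by
      intro r h h'
      unfold phiS
      rw [gPd_zero_of_etaSupp (etaSupp_etaPart h'), gMul_zero_r, add_zero]
    rw [h1, h1]
    exact etaPart_gBr hT hf hg t
  · simp only [if_neg hk, add_zero]
    have hz1 : ∀ i : Fin (ℓ+1), gPd 0 (gPd i (etaFree g)) = fun _ => (0:C) :=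
      fun i => gPd_zero_of_etaSupp (etaSupp_gPd i (etaSupp_etaFree g))
    have hz2 : ∀ i : Fin (ℓ+1), gPd 0 (gPd i (etaFree f)) = fun _ => (0:C) :=
      fun i => gPd_zero_of_etaSupp (etaSupp_gPd i (etaSupp_etaFree f))
    have hphig : ∀ i : Fin (ℓ+1), phiS T p f (gPd i (etaFree g))
        = fun u => gBr (etaExtend T) p (etaFree f) (gPd i (etaFree g)) u := by
      intro i
      funext u
      unfold phiS
      rw [hz1 i, gMul_zero_r, add_zero]
    have hphif : ∀ i : Fin (ℓ+1), phiS T q g (gPd i (etaFree f))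
        = fun u => gBr (etaExtend T) q (etaFree g) (gPd i (etaFree f)) u := by
      intro i
      funext u
      unfold phiS
      rw [hz2 i, gMul_zero_r, add_zero]
    rw [etaFree_gBr]
    simp only [phiS_smul, phiS_sum, hphig, hphif]
    simp only [Finset.mul_sum]
    rw [← Finset.sum_sub_distrib]
    refine Finset.sum_congr rfl fun i _ => ?_
    have hkey := key1 (etaExtend_symm hT) (etaFree_homog hf) (etaFree_homog hg) i t
    linear_combination (etaExtend T i k) * hkey

lemma partII (T : Matrix (Fin ℓ) (Fin ℓ) C) (hT : Tᵀ = T) (p q : ℕ)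
    (f g : Grass (ℓ+1) C) (hf : gHomog p f) (hg : gHomog q g) :
    ∀ (x : Grass (ℓ + 1) C) (t : Finset (Fin (ℓ + 1))),
      phiS T (p + q) (gBr (etaExtend T) p f g) x t =
        phiS T p f (phiS T q g x) t - (-1 : C) ^ (p * q) * phiS T q g (phiS T p f x) t := by
  have hbr := gBr_homog (S := etaExtend T) hf hg
  set D₂ : Grass (ℓ+1) C → Grass (ℓ+1) C := fun x t =>
    phiS T p f (phiS T q g x) t - (-1:C)^(p*q) * phiS T q g (phiS T p f x) t with hD2
  have key := deriv_ext (p + q) (phiS T (p+q) (gBr (etaExtend T) p f g)) D₂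
    (fun A F => phiS_sum T (p+q) _ A F)
    ?_ (fun c x => phiS_smul T (p+q) _ c x) ?_
    (fun a x y hx t => partI T (p+q) a _ x y hbr hx t) ?_ ?_ ?_
  · exact fun x t => key x t
  · -- h2sum
    intro A F
    funext t
    simp only [hD2]
    simp only [phiS_sum, phiS_smul]
    rw [Finset.mul_sum, ← Finset.sum_sub_distrib]
  · -- h2smul
    intro c x
    funext t
    simp only [hD2]
    simp only [phiS_smul]
    ring
  · -- h2der
    intro a x y hx t
    simp only [hD2]
    have e1 : phiS T q g (gMul x y) = fun u => gMul (phiS T q g x) y u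
        + (-1:C)^(q*a) * gMul x (phiS T q g y) u := funext (partI T q a g x y hg hx)
    have e2 : phiS T p f (gMul x y) = fun u => gMul (phiS T p f x) y u
        + (-1:C)^(p*a) * gMul x (phiS T p f y) u := funext (partI T p a f x y hf hx)
    rw [e1, e2]
    simp only [phiS_add, phiS_smul]
    have e3 := partI T p (q+a) f (phiS T q g x) y hf (phiS_homog hg hx) t
    have e4 := partI T p a f x (phiS T q g y) hf hx t
    have e5 := partI T q (p+a) g (phiS T p f x) y hg (phiS_homog hf hx) t
    have e6 := partI T q a g x (phiS T p f y) hg hx t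
    rw [e3, e4, e5, e6]
    have hml : gMul (fun t' => phiS T p f (phiS T q g x) t'
        - (-1:C)^(p*q) * phiS T q g (phiS T p f x) t') y t
        = gMul (fun t' => phiS T p f (phiS T q g x) t') y t
          - (-1:C)^(p*q) * gMul (fun t' => phiS T q g (phiS T p f x) t') y t := by
      rw [gMul_sub_l, gMul_smul_l]
    have hmr : gMul x (fun t' => phiS T p f (phiS T q g y) t'
        - (-1:C)^(p*q) * phiS T q g (phiS T p f y) t') t
        = gMul x (fun t' => phiS T p f (phiS T q g y) t') t
          - (-1:C)^(p*q) * gMul x (fun t' => phiS T q g (phiS T p f y) t') t := by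
      rw [gMul_sub_r, gMul_smul_r]
    rw [hml, hmr]
    have hpw1 : (-1:C)^(p*(q+a)) = (-1:C)^(p*q) * (-1:C)^(p*a) := by
      rw [show p*(q+a) = p*q + p*a from by ring, pow_add]
    have hpw2 : (-1:C)^(q*(p+a)) = (-1:C)^(p*q) * (-1:C)^(q*a) := by
      rw [show q*(p+a) = p*q + q*a from by ring, pow_add]
    have hpw3 : (-1:C)^((p+q)*a) = (-1:C)^(p*a) * (-1:C)^(q*a) := by
      rw [show (p+q)*a = p*a + q*a from by ring, pow_add]
    rw [hpw1, hpw2, hpw3]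
    have hpq := neg_one_sq_pow (C := C) (p*q)
    linear_combination (-((-1:C)^(q*a) * gMul (phiS T p f x) (phiS T q g y) t)) * hpq
  · -- hgen
    exact fun k => gen_agree hT hf hg k
  · -- hone
    rw [phiS_delta_empty]
    simp only [hD2]
    funext t
    rw [phiS_delta_empty, phiS_delta_empty, phiS_zero, phiS_zero]
    simp
end Dev7
-- CHUNK8
section Dev8
variable {ℓ : ℕ} {C : Type} [Field C]

lemma partIII (T : Matrix (Fin ℓ) (Fin ℓ) C) (hTinv : IsUnit T) (p : ℕ)
    (f g : Grass (ℓ+1) C) (hf : gHomog p f) (hg : gHomog p g)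
    (hsame : ∀ x t, phiS T p f x t = phiS T p g x t) :
    ∃ c : C, ∀ t, f t = g t + (if t = ∅ then c else 0) := by
  have hneg : ((-1 : C)) ≠ 0 := by norm_num
  have hgen : ∀ (k : Fin (ℓ+1)) t,
      (-1:C)^(p+1) * ∑ i, etaExtend T i k * gPd i (etaFree f) t
          + (if k = 0 then etaPart f t else 0)
        = (-1:C)^(p+1) * ∑ i, etaExtend T i k * gPd i (etaFree g) t
          + (if k = 0 then etaPart g t else 0) := by
    intro k t
    have hs := hsame (gDelta C {k}) t
    have h1 := congrFun (phiS_gen T p f k) t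
    have h2 := congrFun (phiS_gen T p g k) t
    rw [h1, h2] at hs
    exact hs
  have hpart : ∀ t, etaPart f t = etaPart g t := by
    intro t
    have := hgen 0 t
    simpa only [etaExtend_zero_right, zero_mul, Finset.sum_const_zero, mul_zero, zero_add,
      eq_self_iff_true, if_true] using this
  have hpd : ∀ (i : Fin (ℓ+1)) t, gPd i (etaFree f) t = gPd i (etaFree g) t := by
    have hsucc : ∀ (j : Fin ℓ) t, gPd (j.succ) (etaFree f) t = gPd (j.succ) (etaFree g) t := by
      intro j t
      set w : Fin ℓ → C :=
        fun i => gPd (i.succ) (etaFree f) t - gPd (i.succ) (etaFree g) t with hw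
      have hvm : Matrix.vecMul w T = 0 := by
        funext kk
        have h := hgen (kk.succ) t
        have hks : (kk.succ : Fin (ℓ+1)) ≠ 0 := Fin.succ_ne_zero kk
        rw [if_neg hks, if_neg hks, add_zero, add_zero] at h
        have hnz : ((-1:C)^(p+1)) ≠ 0 := pow_ne_zero _ hneg
        have h2 := mul_left_cancel₀ hnz h
        rw [Fin.sum_univ_succ, Fin.sum_univ_succ] at h2
        have hee : ∀ (i : Fin ℓ), etaExtend T i.succ kk.succ = T i kk := by
          intro i
          unfold etaExtend
          rw [dif_neg (Fin.succ_ne_zero i), dif_neg (Fin.succ_ne_zero kk),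
            Fin.pred_succ, Fin.pred_succ]
        simp only [hee, etaExtend_zero_left, zero_mul, zero_add] at h2
        show (∑ i, w i * T i kk) = 0
        calc (∑ i, w i * T i kk)
            = (∑ i, T i kk * gPd (i.succ) (etaFree f) t)
              - ∑ i, T i kk * gPd (i.succ) (etaFree g) t := by
              rw [← Finset.sum_sub_distrib]
              exact Finset.sum_congr rfl fun i _ => by rw [hw]; ring
          _ = 0 := by rw [h2, sub_self]
      have hdet : IsUnit T.det := (Matrix.isUnit_iff_isUnit_det T).mp hTinv
      have hw0 : w = 0 := by
        have h1 : Matrix.vecMul (Matrix.vecMul w T) T⁻¹ = Matrix.vecMul (0 : Fin ℓ → C) T⁻¹ := by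
          rw [hvm]
        rw [Matrix.vecMul_vecMul, Matrix.mul_nonsing_inv T hdet, Matrix.vecMul_one,
          Matrix.zero_vecMul] at h1
        exact h1
      have hj : w j = 0 := by rw [hw0]; rfl
      rw [hw] at hj
      exact sub_eq_zero.mp hj
    intro i t
    by_cases hi : i = 0
    · subst hi
      rw [gPd_zero_of_etaSupp (etaSupp_etaFree f), gPd_zero_of_etaSupp (etaSupp_etaFree g)]
    · have := hsucc (i.pred hi) t
      rwa [Fin.succ_pred] at this
  refine ⟨f ∅ - g ∅, ?_⟩
  intro t
  by_cases ht : t = ∅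
  · subst ht
    simp
  · rw [if_neg ht, add_zero]
    by_cases h0 : (0 : Fin (ℓ+1)) ∈ t
    · have hp := hpart (t.erase 0)
      have h0e : (0:Fin (ℓ+1)) ∉ t.erase 0 := Finset.notMem_erase _ _
      simp only [etaPart] at hp
      rw [if_neg h0e, if_neg h0e, Finset.insert_erase h0] at hp
      exact mul_left_cancel₀ (pow_ne_zero _ hneg) hp
    · have hne : t.Nonempty := Finset.nonempty_iff_ne_empty.mpr ht
      obtain ⟨i, hi⟩ := hne
      have hp := hpd i (t.erase i)
      have hie : i ∉ t.erase i := Finset.notMem_erase _ _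
      simp only [gPd] at hp
      rw [if_neg hie, if_neg hie, Finset.insert_erase hi] at hp
      simp only [etaFree] at hp
      rw [if_neg h0, if_neg h0] at hp
      exact mul_left_cancel₀ (pow_ne_zero _ hneg) hp
end Dev8


/-- let `T` be a nondegenerate symmetric `ℓ×ℓ` matrix over a field `C`
of characteristic zero, `n = ℓ+1` and `S = [[0,0],[0,T]]` on the generators
`η, ξ₁,…,ξ_ℓ`.  Then `φ_S : H̃(n,S) → W(n)` is an injective homomorphism of ℤ-graded
Lie superalgebras into the Lie superalgebra of derivations of `Λ(n)`:
(i) each `φ_S(f)` is a superderivation of `Λ(n)`;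
(ii) `φ_S({f,g}_S) = [φ_S(f), φ_S(g)] = φ_S(f)∘φ_S(g) − (−1)^{p(f)p(g)} φ_S(g)∘φ_S(f)`;
(iii) `φ_S` is injective on `H̃(n,S) = Λ(n)/C·1`: two homogeneous elements with the
same image differ by a constant. -/
theorem stmt_17 {C : Type} [Field C] [CharZero C] (ℓ : ℕ)
    (T : Matrix (Fin ℓ) (Fin ℓ) C) (hT : Tᵀ = T) (hTinv : IsUnit T) :
    (∀ (p a : ℕ) (f x y : Grass (ℓ + 1) C), gHomog p f → gHomog a x →
      ∀ t, phiS T p f (gMul x y) t =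
        gMul (phiS T p f x) y t + (-1 : C) ^ (p * a) * gMul x (phiS T p f y) t) ∧
    (∀ (p q : ℕ) (f g : Grass (ℓ + 1) C), gHomog p f → gHomog q g →
      ∀ (x : Grass (ℓ + 1) C) (t : Finset (Fin (ℓ + 1))),
        phiS T (p + q) (gBr (etaExtend T) p f g) x t =
          phiS T p f (phiS T q g x) t -
            (-1 : C) ^ (p * q) * phiS T q g (phiS T p f x) t) ∧
    (∀ (p : ℕ) (f g : Grass (ℓ + 1) C), gHomog p f → gHomog p g →
      (∀ x t, phiS T p f x t = phiS T p g x t) →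
      ∃ c : C, ∀ t, f t = g t + (if t = ∅ then c else 0)) := by
  exact ⟨fun p a f x y hf hx t => partI T p a f x y hf hx t,
    fun p q f g hf hg x t => partII T hT p q f g hf hg x t,
    fun p f g hf hg hsame => partIII T hTinv p f g hf hg hsame⟩
end
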